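/- arXiv:2101.06219 — 7 statements merged into one kernel-verified Lean document; each statement's English description precedes it below -/
import Mathlib

section
/- Let V be a finite-dimensional real inner product space, let K ⊆ V be a set closed under multiplication by nonnegative scalars (a possibly nonconvex cone), let H₀ ∈ V and set H = {x ∈ V : ⟪H₀, x⟫ = 1}. Let J be a convex subset of the convex hull of K which is a face of the convex hull of K. If H ∩ J is nonempty and bounded, then the convex hull of H ∩ K ∩ J equals H ∩ J. -/
/-!
A face `J` of the convex hull of a cone is itself a convex cone, and a point `x ∈ H ∩ J`, written
as a convex combination of points `zᵢ ∈ K`, has all its `zᵢ` in `J`. If `⟪H₀, zᵢ⟫ ≤ 0`, then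
`zᵢ - ⟪H₀, zᵢ⟫ • x` lies in `J` and is orthogonal to `H₀`, so the whole ray from `x` in that
direction stays in the bounded set `H ∩ J`; hence `zᵢ = ⟪H₀, zᵢ⟫ • x`. Moving these terms to the
other side, `x` becomes a positive multiple of the combination of the `zᵢ` with `⟪H₀, zᵢ⟫ > 0`,
and rescaling each of those onto `H` writes `x` as a convex combination of points of `H ∩ K ∩ J`.
-/

open RealInnerProductSpace

section Module

variable {E : Type*} [AddCommGroup E] [Module ℝ E]

open scoped Pointwise in
theorem smul_mem_convexHull_of_forall_smul_mem {K : Set E}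
    (hK : ∀ c : ℝ, 0 ≤ c → ∀ x ∈ K, c • x ∈ K) :
    ∀ c : ℝ, 0 ≤ c → ∀ x ∈ convexHull ℝ K, c • x ∈ convexHull ℝ K := by
  intro c hc x hx
  have hcK : c • K ⊆ K := Set.smul_set_subset_iff.2 (hK c hc)
  exact convexHull_mono hcK (convexHull_smul c K ▸ Set.smul_mem_smul_set hx)

theorem Convex.add_mem_of_forall_smul_mem {C : Set E} (hC : Convex ℝ C)
    (hsmul : ∀ c : ℝ, 0 ≤ c → ∀ x ∈ C, c • x ∈ C) {x y : E} (hx : x ∈ C) (hy : y ∈ C) :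
    x + y ∈ C := by
  have hmid := hC (hsmul 2 zero_le_two x hx) (hsmul 2 zero_le_two y hy)
    (by norm_num : (0 : ℝ) ≤ 1 / 2) (by norm_num : (0 : ℝ) ≤ 1 / 2) (by norm_num)
  convert hmid using 1
  module

theorem IsExtreme.forall_smul_mem {A B : Set E} (hA : ∀ c : ℝ, 0 ≤ c → ∀ x ∈ A, c • x ∈ A)
    (hAB : IsExtreme ℝ A B) (hB : Convex ℝ B) :
    ∀ c : ℝ, 0 ≤ c → ∀ y ∈ B, c • y ∈ B := by
  intro c hc y hy
  have h0A : (0 : E) ∈ A := by simpa using hA 0 le_rfl y (hAB.1 hy)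
  have h_large : ∀ c : ℝ, 1 < c → (0 : E) ∈ B ∧ c • y ∈ B := by
    intro c hc
    have hc0 : 0 < c := zero_lt_one.trans hc
    have hseg : y ∈ openSegment ℝ 0 (c • y) :=
      ⟨1 - c⁻¹, c⁻¹, sub_pos.2 (inv_lt_one_of_one_lt₀ hc), inv_pos.2 hc0, sub_add_cancel 1 c⁻¹,
        by rw [smul_zero, zero_add, inv_smul_smul₀ hc0.ne']⟩
    have hcyA := hA c hc0.le y (hAB.1 hy)
    exact ⟨hAB.2 h0A hcyA hy hseg, hAB.right_mem_of_mem_openSegment h0A hcyA hy hseg⟩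
  rcases le_or_gt c 1 with hc1 | hc1
  · exact hB.smul_mem_of_zero_mem (h_large 2 one_lt_two).1 hy ⟨hc, hc1⟩
  · exact (h_large c hc1).2

theorem IsExtreme.mem_of_sum_smul_mem {ι : Type*} [Fintype ι] {A B : Set E} (hA : Convex ℝ A)
    (hAB : IsExtreme ℝ A B) {w : ι → ℝ} {z : ι → E} (hw : ∀ i, 0 < w i) (hw₁ : ∑ i, w i = 1)
    (hz : ∀ i, z i ∈ A) (hB : ∑ i, w i • z i ∈ B) (i : ι) : z i ∈ B := by
  classical
  set s := Finset.univ.erase i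
  rw [← Finset.add_sum_erase _ _ (Finset.mem_univ i)] at hB hw₁
  rcases (Finset.sum_nonneg fun j _ => (hw j).le : 0 ≤ ∑ j ∈ s, w j).eq_or_lt with hW | hW
  · have hw_zero := (Finset.sum_eq_zero_iff_of_nonneg fun j _ => (hw j).le).1 hW.symm
    rw [Finset.sum_eq_zero fun j hj => by rw [hw_zero j hj, zero_smul], add_zero] at hB
    rw [← hW, add_zero] at hw₁
    simpa [hw₁] using hB
  · have hyA : s.centerMass w z ∈ A :=
      hA.centerMass_mem (fun j _ => (hw j).le) hW fun j _ => hz j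
    rw [← smul_inv_smul₀ hW.ne' (∑ j ∈ s, w j • z j)] at hB
    exact hAB.2 (hz i) hyA hB ⟨w i, _, hw i, hW, hw₁, rfl⟩

theorem mem_convexHull_inter_of_sum_smul_eq {ι : Type*} (t : Finset ι) {C : Set E}
    (hsmul : ∀ c : ℝ, 0 ≤ c → ∀ x ∈ C, c • x ∈ C) (f : E →ₗ[ℝ] ℝ) {w : ι → ℝ} {z : ι → E}
    {x : E} (hw : ∀ i ∈ t, 0 ≤ w i) (hz : ∀ i ∈ t, z i ∈ C) (hx : ∑ i ∈ t, w i • z i = x)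
    (hfx : f x = 1) (hnonpos : ∀ i ∈ t, f (z i) ≤ 0 → z i = f (z i) • x) :
    x ∈ convexHull ℝ ({y | f y = 1} ∩ C) := by
  classical
  set P := t.filter fun i => 0 < f (z i)
  set N := t.filter fun i => ¬0 < f (z i)
  set α := ∑ i ∈ P, w i * f (z i)
  set β := ∑ i ∈ N, w i * f (z i)
  have hαβ : α + β = 1 := by
    rw [Finset.sum_filter_add_sum_filter_not, ← hfx, ← hx, map_sum]
    simp only [map_smul, smul_eq_mul]
  have hβ : β ≤ 0 := Finset.sum_nonpos fun i hi =>
    mul_nonpos_of_nonneg_of_nonpos (hw i (Finset.mem_filter.1 hi).1)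
      (not_lt.1 (Finset.mem_filter.1 hi).2)
  have hα : 0 < α := by linarith
  have hN : ∑ i ∈ N, w i • z i = β • x := by
    rw [Finset.sum_smul]
    refine Finset.sum_congr rfl fun i hi => ?_
    rw [mul_smul, ← hnonpos i (Finset.mem_filter.1 hi).1 (not_lt.1 (Finset.mem_filter.1 hi).2)]
  have hP : ∑ i ∈ P, w i • z i = α • x := by
    have hsplit := Finset.sum_filter_add_sum_filter_not t (fun i => 0 < f (z i)) fun i => w i • z i
    rw [hx, hN] at hsplit
    linear_combination (norm := module) hsplit - hαβ • x
  have hcm : P.centerMass (fun i => w i * f (z i)) (fun i => (f (z i))⁻¹ • z i) = x := by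
    have hterm : ∀ i ∈ P, (w i * f (z i)) • (f (z i))⁻¹ • z i = w i • z i := fun i hi => by
      rw [smul_smul, mul_assoc, mul_inv_cancel₀ (Finset.mem_filter.1 hi).2.ne', mul_one]
    rw [Finset.centerMass, Finset.sum_congr rfl hterm, hP, inv_smul_smul₀ hα.ne']
  rw [← hcm]
  refine P.centerMass_mem_convexHull (fun i hi => ?_) hα fun i hi => ?_ <;>
    obtain ⟨hit, hpos⟩ := Finset.mem_filter.1 hi
  · exact mul_nonneg (hw i hit) hpos.le
  · exact ⟨by simp [inv_mul_cancel₀ hpos.ne'], hsmul _ (inv_nonneg.2 hpos.le) _ (hz i hit)⟩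

end Module

section Normed

variable {F : Type*} [NormedAddCommGroup F] [NormedSpace ℝ F]

theorem eq_zero_of_forall_add_smul_mem_of_isBounded {S : Set F} (hS : Bornology.IsBounded S)
    {x v : F} (hray : ∀ s : ℝ, 0 ≤ s → x + s • v ∈ S) : v = 0 := by
  obtain ⟨R, hR⟩ := isBounded_iff_forall_norm_le.1 hS
  have hbound : ∀ s : ℝ, 0 ≤ s → s * ‖v‖ ≤ R + ‖x‖ := fun s hs =>
    calc s * ‖v‖ = ‖(x + s • v) - x‖ := by
          rw [add_sub_cancel_left, norm_smul, Real.norm_of_nonneg hs]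
      _ ≤ ‖x + s • v‖ + ‖x‖ := norm_sub_le _ _
      _ ≤ R + ‖x‖ := by gcongr; exact hR _ (hray s hs)
  by_contra hv
  have hv_pos : 0 < ‖v‖ := norm_pos_iff.2 hv
  have hR_nonneg : 0 ≤ R + ‖x‖ := by linarith [hbound 0 le_rfl, norm_nonneg x]
  have hfar := hbound ((R + ‖x‖ + 1) / ‖v‖) (by positivity)
  rw [div_mul_cancel₀ _ hv_pos.ne'] at hfar
  linarith

theorem eq_smul_of_apply_nonpos {C : Set F} (hC : Convex ℝ C)
    (hsmul : ∀ c : ℝ, 0 ≤ c → ∀ x ∈ C, c • x ∈ C) (f : F →ₗ[ℝ] ℝ)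
    (hbdd : Bornology.IsBounded ({y | f y = 1} ∩ C)) {x z : F}
    (hx : x ∈ {y | f y = 1} ∩ C) (hz : z ∈ C) (hfz : f z ≤ 0) : z = f z • x := by
  have hfx : f x = 1 := hx.1
  have hv : z + (-f z) • x ∈ C :=
    hC.add_mem_of_forall_smul_mem hsmul hz (hsmul _ (neg_nonneg.2 hfz) x hx.2)
  have hv0 := eq_zero_of_forall_add_smul_mem_of_isBounded hbdd (x := x) fun s hs =>
    ⟨by simp [hfx], hC.add_mem_of_forall_smul_mem hsmul hx.2 (hsmul s hs _ hv)⟩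
  rwa [neg_smul, ← sub_eq_add_neg, sub_eq_zero] at hv0

end Normed

theorem stmt_0_general {V : Type*} [NormedAddCommGroup V] [InnerProductSpace ℝ V]
    (K : Set V) (hK : ∀ c : ℝ, 0 ≤ c → ∀ x ∈ K, c • x ∈ K)
    (H₀ : V) (J : Set V)
    (hJconv : Convex ℝ J) (hJsub : J ⊆ convexHull ℝ K)
    (hJface : IsExtreme ℝ (convexHull ℝ K) J)
    (hbdd : Bornology.IsBounded ({x : V | ⟪H₀, x⟫ = 1} ∩ J)) :
    convexHull ℝ ({x : V | ⟪H₀, x⟫ = 1} ∩ K ∩ J) = {x : V | ⟪H₀, x⟫ = 1} ∩ J := by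
  let f := innerₗ V H₀
  have hJsmul := hJface.forall_smul_mem (smul_mem_convexHull_of_forall_smul_mem hK) hJconv
  refine (convexHull_min (t := {x : V | ⟪H₀, x⟫ = 1} ∩ J) (fun x hx => ⟨hx.1.1, hx.2⟩)
    ((convex_hyperplane f.isLinear 1).inter hJconv)).antisymm fun x hx => ?_
  obtain ⟨ι, _, z, w, hzK, -, hw, hw₁, hzx⟩ := eq_pos_convex_span_of_mem_convexHull (hJsub hx.2)
  have hzJ : ∀ i, z i ∈ J := hJface.mem_of_sum_smul_mem (convex_convexHull ℝ K) hw hw₁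
    (fun i => subset_convexHull ℝ K (hzK ⟨i, rfl⟩)) (hzx ▸ hx.2)
  rw [Set.inter_assoc]
  exact mem_convexHull_inter_of_sum_smul_eq Finset.univ (C := K ∩ J)
    (fun c hc y hy => ⟨hK c hc y hy.1, hJsmul c hc y hy.2⟩) f (fun i _ => (hw i).le)
    (fun i _ => ⟨hzK ⟨i, rfl⟩, hzJ i⟩) hzx hx.1
    fun i _ hi => eq_smul_of_apply_nonpos hJconv hJsmul f hbdd hx (hzJ i) hi

theorem stmt_0 {V : Type*} [NormedAddCommGroup V] [InnerProductSpace ℝ V]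
    [FiniteDimensional ℝ V]
    (K : Set V) (hK : ∀ c : ℝ, 0 ≤ c → ∀ x ∈ K, c • x ∈ K)
    (H₀ : V) (J : Set V)
    (hJconv : Convex ℝ J) (hJsub : J ⊆ convexHull ℝ K)
    (hJface : IsExtreme ℝ (convexHull ℝ K) J)
    (hne : ({x : V | ⟪H₀, x⟫ = 1} ∩ J).Nonempty)
    (hbdd : Bornology.IsBounded ({x : V | ⟪H₀, x⟫ = 1} ∩ J)) :
    convexHull ℝ ({x : V | ⟪H₀, x⟫ = 1} ∩ K ∩ J) = {x : V | ⟪H₀, x⟫ = 1} ∩ J :=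
  stmt_0_general K hK H₀ J hJconv hJsub hJface hbdd
end

section
/- Let K₁ ⊆ ℝ^{m₁} and K₂ ⊆ ℝ^{m₂} be nonempty cones, let z₁ ∈ ℝ^{m₁}, z₂ ∈ ℝ^{m₂}, and let Y₁, Y₂ be symmetric real matrices of orders m₁ and m₂ respectively. If the block matrix [[Y₁, z₁],[z₁ᵀ, 1]] belongs to CPP(K₁ × ℝ₊) and the block matrix [[1, z₂ᵀ],[z₂, Y₂]] belongs to CPP(ℝ₊ × K₂), then the (m₁+1+m₂)×(m₁+1+m₂) block matrix [[Y₁, z₁, z₁ z₂ᵀ],[z₁ᵀ, 1, z₂ᵀ],[z₂ z₁ᵀ, z₂, Y₂]] belongs to CPP(K₁ × ℝ₊ × K₂). -/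
open Matrix

/-- `CPP K` is the set of matrices `M` that can be written as a finite sum
`∑ l, v l * (v l)ᵀ` with every `v l ∈ K`. -/
def CPP {d : Type*} (K : Set (d → ℝ)) : Set (Matrix d d ℝ) :=
  {M | ∃ (r : ℕ) (v : Fin r → d → ℝ), (∀ l, v l ∈ K) ∧
    M = ∑ l, Matrix.vecMulVec (v l) (v l)}

/-- The product `A × B` of sets of vectors, realized as block vectors indexed by `p ⊕ q`. -/
def SetProd {p q : Type*} (A : Set (p → ℝ)) (B : Set (q → ℝ)) : Set (p ⊕ q → ℝ) :=
  {v | (fun i => v (Sum.inl i)) ∈ A ∧ (fun j => v (Sum.inr j)) ∈ B}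

/-- A cone: a set closed under multiplication by nonnegative scalars. -/
def IsCone {d : Type*} (K : Set (d → ℝ)) : Prop :=
  ∀ c : ℝ, 0 ≤ c → ∀ x ∈ K, c • x ∈ K

/-!
Write the first matrix as `∑ₗ (xₗ; sₗ)(xₗ; sₗ)ᵀ` and the second as `∑ₖ (tₖ; yₖ)(tₖ; yₖ)ᵀ`.
The vectors `(tₖ xₗ; sₗ tₖ; sₗ yₖ)` lie in `K₁ × ℝ₊ × K₂` because the cones absorb the
nonnegative factors, and the sum of their outer products has blocks that factor as products of
entries of the two given matrices (`gluedMatrix`). The corners `∑ sₗ² = ∑ tₖ² = 1` make these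
products the required blocks.
-/

section

variable {d p q ι κ : Type*} [Fintype ι] [Fintype κ]

theorem sum_vecMulVec_apply (v : ι → d → ℝ) (a b : d) :
    (∑ l, vecMulVec (v l) (v l)) a b = ∑ l, v l a * v l b := by
  simp only [Matrix.sum_apply, vecMulVec_apply]

theorem sum_vecMulVec_mem_CPP {K : Set (d → ℝ)} (v : ι → d → ℝ) (hv : ∀ l, v l ∈ K) :
    ∑ l, vecMulVec (v l) (v l) ∈ CPP K :=
  ⟨Fintype.card ι, v ∘ (Fintype.equivFin ι).symm, fun _ => hv _,
    (Equiv.sum_comp (Fintype.equivFin ι).symm fun l => vecMulVec (v l) (v l)).symm⟩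

def glueVec (u : p ⊕ Fin 1 → ℝ) (w : Fin 1 ⊕ q → ℝ) : (p ⊕ Fin 1) ⊕ q → ℝ :=
  Sum.elim (w (Sum.inl 0) • u) (u (Sum.inr 0) • fun j => w (Sum.inr j))

def gluedMatrix (A : Matrix (p ⊕ Fin 1) (p ⊕ Fin 1) ℝ) (B : Matrix (Fin 1 ⊕ q) (Fin 1 ⊕ q) ℝ) :
    Matrix ((p ⊕ Fin 1) ⊕ q) ((p ⊕ Fin 1) ⊕ q) ℝ :=
  fromBlocks (of fun a b => A a b * B (Sum.inl 0) (Sum.inl 0))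
    (of fun a j => A a (Sum.inr 0) * B (Sum.inl 0) (Sum.inr j))
    (of fun j a => A (Sum.inr 0) a * B (Sum.inr j) (Sum.inl 0))
    (of fun j j' => A (Sum.inr 0) (Sum.inr 0) * B (Sum.inr j) (Sum.inr j'))

theorem gluedMatrix_sum_vecMulVec (u : ι → p ⊕ Fin 1 → ℝ) (w : κ → Fin 1 ⊕ q → ℝ) :
    gluedMatrix (∑ l, vecMulVec (u l) (u l)) (∑ k, vecMulVec (w k) (w k)) =
      ∑ x : ι × κ, vecMulVec (glueVec (u x.1) (w x.2)) (glueVec (u x.1) (w x.2)) := by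
  ext (a | j) (b | j') <;>
    simp only [gluedMatrix, fromBlocks_apply₁₁, fromBlocks_apply₁₂, fromBlocks_apply₂₁,
      fromBlocks_apply₂₂, of_apply, sum_vecMulVec_apply, Fintype.sum_prod_type,
      Finset.sum_mul_sum, glueVec, Sum.elim_inl, Sum.elim_inr, Pi.smul_apply, smul_eq_mul] <;>
    exact Finset.sum_congr rfl fun _ _ => Finset.sum_congr rfl fun _ _ => by ring

theorem glueVec_mem {K₁ : Set (p → ℝ)} {K₂ : Set (q → ℝ)} (hK₁ : IsCone K₁) (hK₂ : IsCone K₂)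
    {u : p ⊕ Fin 1 → ℝ} {w : Fin 1 ⊕ q → ℝ} (hu : u ∈ SetProd K₁ {v : Fin 1 → ℝ | 0 ≤ v 0})
    (hw : w ∈ SetProd {v : Fin 1 → ℝ | 0 ≤ v 0} K₂) :
    glueVec u w ∈ SetProd (SetProd K₁ {v : Fin 1 → ℝ | 0 ≤ v 0}) K₂ :=
  ⟨⟨hK₁ _ hw.1 _ hu.1, show 0 ≤ w (Sum.inl 0) * u (Sum.inr 0) from mul_nonneg hw.1 hu.2⟩,
    hK₂ _ hu.2 _ hw.2⟩

theorem gluedMatrix_mem_CPP {K₁ : Set (p → ℝ)} {K₂ : Set (q → ℝ)} (hK₁ : IsCone K₁)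
    (hK₂ : IsCone K₂) {A : Matrix (p ⊕ Fin 1) (p ⊕ Fin 1) ℝ}
    {B : Matrix (Fin 1 ⊕ q) (Fin 1 ⊕ q) ℝ}
    (hA : A ∈ CPP (SetProd K₁ {v : Fin 1 → ℝ | 0 ≤ v 0}))
    (hB : B ∈ CPP (SetProd {v : Fin 1 → ℝ | 0 ≤ v 0} K₂)) :
    gluedMatrix A B ∈ CPP (SetProd (SetProd K₁ {v : Fin 1 → ℝ | 0 ≤ v 0}) K₂) := by
  obtain ⟨r₁, u, hu, rfl⟩ := hA
  obtain ⟨r₂, w, hw, rfl⟩ := hB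
  rw [gluedMatrix_sum_vecMulVec]
  exact sum_vecMulVec_mem_CPP _ fun x => glueVec_mem hK₁ hK₂ (hu x.1) (hw x.2)

end

theorem stmt_5_general (m₁ m₂ : ℕ)
    (K₁ : Set (Fin m₁ → ℝ)) (K₂ : Set (Fin m₂ → ℝ))
    (hK₁ : IsCone K₁) (hK₂ : IsCone K₂)
    (z₁ : Fin m₁ → ℝ) (z₂ : Fin m₂ → ℝ)
    (Y₁ : Matrix (Fin m₁) (Fin m₁) ℝ)
    (Y₂ : Matrix (Fin m₂) (Fin m₂) ℝ)
    (h1 : Matrix.fromBlocks Y₁ (Matrix.of fun i (_ : Fin 1) => z₁ i)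
        (Matrix.of fun (_ : Fin 1) j => z₁ j) (Matrix.of fun _ _ => (1 : ℝ))
        ∈ CPP (SetProd K₁ {v : Fin 1 → ℝ | 0 ≤ v 0}))
    (h2 : Matrix.fromBlocks (Matrix.of fun (_ _ : Fin 1) => (1 : ℝ))
        (Matrix.of fun (_ : Fin 1) j => z₂ j) (Matrix.of fun i (_ : Fin 1) => z₂ i) Y₂
        ∈ CPP (SetProd {v : Fin 1 → ℝ | 0 ≤ v 0} K₂)) :
    Matrix.fromBlocks
      (Matrix.fromBlocks Y₁ (Matrix.of fun i (_ : Fin 1) => z₁ i)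
        (Matrix.of fun (_ : Fin 1) j => z₁ j) (Matrix.of fun _ _ => (1 : ℝ)))
      (Matrix.of fun i j => Sum.elim (fun a => z₁ a * z₂ j) (fun _ => z₂ j) i)
      (Matrix.of fun i j => Sum.elim (fun a => z₂ i * z₁ a) (fun _ => z₂ i) j)
      Y₂
      ∈ CPP (SetProd (SetProd K₁ {v : Fin 1 → ℝ | 0 ≤ v 0}) K₂) := by
  convert gluedMatrix_mem_CPP hK₁ hK₂ h1 h2 using 1
  ext ((i | _) | j) ((i' | _) | j') <;> simp [gluedMatrix, mul_comm]

theorem stmt_5 (m₁ m₂ : ℕ)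
    (K₁ : Set (Fin m₁ → ℝ)) (K₂ : Set (Fin m₂ → ℝ))
    (hK₁ : IsCone K₁) (hK₂ : IsCone K₂) (hne₁ : K₁.Nonempty) (hne₂ : K₂.Nonempty)
    (z₁ : Fin m₁ → ℝ) (z₂ : Fin m₂ → ℝ)
    (Y₁ : Matrix (Fin m₁) (Fin m₁) ℝ) (hY₁ : Y₁.IsSymm)
    (Y₂ : Matrix (Fin m₂) (Fin m₂) ℝ) (hY₂ : Y₂.IsSymm)
    (h1 : Matrix.fromBlocks Y₁ (Matrix.of fun i (_ : Fin 1) => z₁ i)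
        (Matrix.of fun (_ : Fin 1) j => z₁ j) (Matrix.of fun _ _ => (1 : ℝ))
        ∈ CPP (SetProd K₁ {v : Fin 1 → ℝ | 0 ≤ v 0}))
    (h2 : Matrix.fromBlocks (Matrix.of fun (_ _ : Fin 1) => (1 : ℝ))
        (Matrix.of fun (_ : Fin 1) j => z₂ j) (Matrix.of fun i (_ : Fin 1) => z₂ i) Y₂
        ∈ CPP (SetProd {v : Fin 1 → ℝ | 0 ≤ v 0} K₂)) :
    Matrix.fromBlocks
      (Matrix.fromBlocks Y₁ (Matrix.of fun i (_ : Fin 1) => z₁ i)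
        (Matrix.of fun (_ : Fin 1) j => z₁ j) (Matrix.of fun _ _ => (1 : ℝ)))
      (Matrix.of fun i j => Sum.elim (fun a => z₁ a * z₂ j) (fun _ => z₂ j) i)
      (Matrix.of fun i j => Sum.elim (fun a => z₂ i * z₁ a) (fun _ => z₂ i) j)
      Y₂
      ∈ CPP (SetProd (SetProd K₁ {v : Fin 1 → ℝ | 0 ≤ v 0}) K₂) :=
  stmt_5_general m₁ m₂ K₁ K₂ hK₁ hK₂ z₁ z₂ Y₁ Y₂ h1 h2
end

section
/- Let n₁, n₂, S ≥ 1, fix k ∈ {1,…,n₁}, and let K₁,…,K_S ⊆ ℝ^{n₂} be nonempty cones. Let x ∈ ℝ and, for each i ∈ {1,…,S}, let z_i ∈ ℝ^{n₂} and let Y_i be a symmetric n₂×n₂ real matrix such that the block matrix [[x, z_iᵀ],[z_i, Y_i]] belongs to CPP(ℝ₊ × K_i). Then the connected component (x e_k e_kᵀ, (z_i e_kᵀ, Y_i)_{i=1}^S), where e_k denotes the k-th standard basis vector of ℝ^{n₁}, belongs to CMP(ℝ^{n₁}₊, K₁,…,K_S), where ℝ^{n₁}₊ is the nonnegative orthant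 of ℝ^{n₁}. -/
open Matrix

/-- The cone `CMP(K₀, K₁, …, K_S)` of completable, completely positive connected
components: the convex hull of the tuples
`(x xᵀ, (y_i xᵀ, y_i y_iᵀ)_{i})` with `x ∈ K₀` and `y_i ∈ K_i`. -/
def CMP {ι₀ ι₁ : Type*} {S : ℕ} (K₀ : Set (ι₀ → ℝ)) (Ki : Fin S → Set (ι₁ → ℝ)) :
    Set (Matrix ι₀ ι₀ ℝ × (Fin S → Matrix ι₁ ι₀ ℝ × Matrix ι₁ ι₁ ℝ)) :=
  convexHull ℝ {T | ∃ x ∈ K₀, ∃ y : Fin S → ι₁ → ℝ, (∀ i, y i ∈ Ki i) ∧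
    T = (Matrix.vecMulVec x x,
      fun i => (Matrix.vecMulVec (y i) x, Matrix.vecMulVec (y i) (y i)))}

/-! Write each block matrix as `∑ l, (t i l, w i l) (t i l, w i l)ᵀ` with `t i l ≥ 0` and
`w i l ∈ K_i`, so that `x = ∑ l, t i l ^ 2`, `z i = ∑ l, t i l • w i l` and
`Y i = ∑ l, w i l (w i l)ᵀ`. Fix `u = √x • e_k`. For each `i`, the convex combination with weights
`t i l ^ 2 / x` of the pairs `(y uᵀ, y yᵀ)` with `y = (√x / t i l) • w i l ∈ K_i` equals
`(z i e_kᵀ, ∑_{t i l ≠ 0} w i l (w i l)ᵀ)`. The convex hull of a product of sets is the product of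
the convex hulls, so these `S` combinations assemble into a single point of `CMP` whose first
block is `u uᵀ = x e_k e_kᵀ`. The terms with `t i l = 0` that are still missing are generators
with first block `0`. Finally, `CMP` is the convex hull of a cone containing `0`, so it is
closed under addition. -/

open Finset

section ConvexHullOfCone

variable {E : Type*} [AddCommGroup E] [Module ℝ E] {G : Set E}

open scoped Pointwise in
theorem smul_mem_convexHull_of_cone (hG : ∀ c : ℝ, 0 ≤ c → ∀ g ∈ G, c • g ∈ G)
    {c : ℝ} (hc : 0 ≤ c) {a : E} (ha : a ∈ convexHull ℝ G) : c • a ∈ convexHull ℝ G := by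
  have hsub : c • G ⊆ G := Set.smul_set_subset_iff.2 fun g hg => hG c hc g hg
  exact convexHull_mono hsub (convexHull_smul c G ▸ Set.smul_mem_smul_set ha)

theorem add_mem_convexHull_of_cone (hG : ∀ c : ℝ, 0 ≤ c → ∀ g ∈ G, c • g ∈ G)
    {a b : E} (ha : a ∈ convexHull ℝ G) (hb : b ∈ convexHull ℝ G) :
    a + b ∈ convexHull ℝ G := by
  have h := convex_convexHull ℝ G (smul_mem_convexHull_of_cone hG zero_le_two ha)
    (smul_mem_convexHull_of_cone hG zero_le_two hb) one_half_pos.le one_half_pos.le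
    (add_halves 1)
  rwa [smul_smul, smul_smul, one_div, inv_mul_cancel₀ two_ne_zero, one_smul, one_smul] at h

theorem sum_mem_convexHull_of_cone (hG : ∀ c : ℝ, 0 ≤ c → ∀ g ∈ G, c • g ∈ G)
    (h0 : (0 : E) ∈ G) {ι : Type*} (s : Finset ι) {f : ι → E}
    (hf : ∀ j ∈ s, f j ∈ convexHull ℝ G) : ∑ j ∈ s, f j ∈ convexHull ℝ G :=
  Finset.sum_induction f _ (fun _ _ => add_mem_convexHull_of_cone hG)
    (subset_convexHull ℝ G h0) hf

end ConvexHullOfCone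

theorem IsCone.zero_mem {d : Type*} {K : Set (d → ℝ)} (hK : IsCone K) (hne : K.Nonempty) :
    (0 : d → ℝ) ∈ K := by
  obtain ⟨y, hy⟩ := hne
  simpa using hK 0 le_rfl y hy

theorem smul_vecMulVec_eq_vecMulVec_sqrt_smul (c : ℝ) (hc : 0 ≤ c) {m n : Type*} (a : m → ℝ) (b : n → ℝ) :
    c • vecMulVec a b = vecMulVec (√c • a) (√c • b) := by
  rw [smul_vecMulVec, vecMulVec_smul, smul_smul, Real.mul_self_sqrt hc]

section Components

variable {ι₀ ι₁ : Type*}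

theorem sum_vecMulVec {κ : Type*} (s : Finset κ) (a : κ → ι₁ → ℝ) (b : ι₀ → ℝ) :
    vecMulVec (∑ l ∈ s, a l) b = ∑ l ∈ s, vecMulVec (a l) b := by
  ext
  simp only [vecMulVec_apply, Matrix.sum_apply, Finset.sum_apply, sum_mul]

def blockGenerators (K : Set (ι₁ → ℝ)) (u : ι₀ → ℝ) : Set (Matrix ι₁ ι₀ ℝ × Matrix ι₁ ι₁ ℝ) :=
  (fun y => (vecMulVec y u, vecMulVec y y)) '' K

theorem mem_convexHull_blockGenerators {K : Set (ι₁ → ℝ)} (hK : IsCone K) (h0 : 0 ∈ K)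
    {κ : Type*} [Fintype κ] {t : κ → ℝ} (ht : ∀ l, 0 ≤ t l) {w : κ → ι₁ → ℝ}
    (hw : ∀ l, w l ∈ K) (e : ι₀ → ℝ) :
    (vecMulVec (∑ l, t l • w l) e, ∑ l with t l ≠ 0, vecMulVec (w l) (w l)) ∈
      convexHull ℝ (blockGenerators K (√(∑ l, t l ^ 2) • e)) := by
  set x := ∑ l, t l ^ 2
  rcases (sum_nonneg fun l _ => sq_nonneg (t l) : 0 ≤ x).eq_or_lt with hx | hx
  · have ht0 : ∀ l, t l = 0 := fun l => pow_eq_zero_iff two_ne_zero |>.1 <|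
      (sum_eq_zero_iff_of_nonneg fun l _ => sq_nonneg (t l)).1 hx.symm l (mem_univ l)
    refine subset_convexHull ℝ _ ⟨0, h0, ?_⟩
    simp [ht0]
  -- Weights `t l ^ 2 / x`; for `t l = 0` both weight and point (via `√x / 0 = 0`) vanish.
  · set y : κ → ι₁ → ℝ := fun l => (√x / t l) • w l
    have hterm : ∀ l, (t l ^ 2 / x) • (vecMulVec (y l) (√x • e), vecMulVec (y l) (y l)) =
        (vecMulVec (t l • w l) e, if t l ≠ 0 then vecMulVec (w l) (w l) else 0) := by
      intro l
      rcases eq_or_ne (t l) 0 with h | h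
      · simp [h]
        rfl
      · have hsq : √x ^ 2 = x := Real.sq_sqrt hx.le
        simp only [y, smul_vecMulVec, vecMulVec_smul, Prod.smul_mk, smul_smul, if_pos h]
        congr 2
        · field_simp
          rw [hsq, div_self hx.ne']
        · field_simp
          rw [hsq, div_self hx.ne', one_smul]
    have hmem := (convex_convexHull ℝ (blockGenerators K (√x • e))).sum_mem
      (t := univ) (w := fun l => t l ^ 2 / x)
      (fun l _ => by positivity) (by rw [← sum_div, div_self hx.ne'])
      (fun l _ => subset_convexHull ℝ _ ⟨y l, hK _ (by positivity [ht l]) _ (hw l), rfl⟩)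
    convert hmem using 1
    simp only [hterm, Prod.ext_iff, Prod.fst_sum, Prod.snd_sum, sum_ite, sum_const_zero, add_zero]
    exact ⟨sum_vecMulVec _ _ _, trivial⟩

end Components

theorem exists_decomposition_of_mem_CPP {q : Type*} {K : Set (q → ℝ)} {x : ℝ} {z : q → ℝ}
    {Y : Matrix q q ℝ}
    (h : fromBlocks (of fun (_ _ : Fin 1) => x) (of fun (_ : Fin 1) j => z j)
      (of fun a (_ : Fin 1) => z a) Y ∈ CPP (SetProd {v : Fin 1 → ℝ | 0 ≤ v 0} K)) :
    ∃ (r : ℕ) (t : Fin r → ℝ) (w : Fin r → q → ℝ), (∀ l, 0 ≤ t l) ∧ (∀ l, w l ∈ K) ∧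
      x = ∑ l, t l ^ 2 ∧ z = ∑ l, t l • w l ∧ Y = ∑ l, vecMulVec (w l) (w l) := by
  obtain ⟨r, v, hv, hM⟩ := h
  refine ⟨r, fun l => v l (.inl 0), fun l j => v l (.inr j), fun l => (hv l).1, fun l => (hv l).2,
    ?_, ?_, ?_⟩
  · simpa [sq, Matrix.sum_apply, vecMulVec_apply] using congr_fun₂ hM (.inl 0) (.inl 0)
  · ext a
    simpa [Matrix.sum_apply, vecMulVec_apply, mul_comm] using congr_fun₂ hM (.inr a) (.inl 0)
  · ext a b
    simpa [Matrix.sum_apply, vecMulVec_apply] using congr_fun₂ hM (.inr a) (.inr b)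

section CMP

variable {ι₀ ι₁ : Type*} {S : ℕ} {K₀ : Set (ι₀ → ℝ)} {Ki : Fin S → Set (ι₁ → ℝ)}

def cmpGenerators (K₀ : Set (ι₀ → ℝ)) (Ki : Fin S → Set (ι₁ → ℝ)) :
    Set (Matrix ι₀ ι₀ ℝ × (Fin S → Matrix ι₁ ι₀ ℝ × Matrix ι₁ ι₁ ℝ)) :=
  {T | ∃ x ∈ K₀, ∃ y : Fin S → ι₁ → ℝ, (∀ i, y i ∈ Ki i) ∧
    T = (Matrix.vecMulVec x x,
      fun i => (Matrix.vecMulVec (y i) x, Matrix.vecMulVec (y i) (y i)))}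

theorem smul_mem_cmpGenerators (h₀ : IsCone K₀) (hK : ∀ i, IsCone (Ki i)) (c : ℝ) (hc : 0 ≤ c)
    (T) (hT : T ∈ cmpGenerators K₀ Ki) : c • T ∈ cmpGenerators K₀ Ki := by
  obtain ⟨x, hx, y, hy, rfl⟩ := hT
  refine ⟨√c • x, h₀ _ (Real.sqrt_nonneg c) x hx, fun i => √c • y i,
    fun i => hK i _ (Real.sqrt_nonneg c) _ (hy i), ?_⟩
  simp only [Prod.smul_mk, Pi.smul_def, smul_vecMulVec_eq_vecMulVec_sqrt_smul c hc]

theorem zero_mem_cmpGenerators (h₀ : 0 ∈ K₀) (hK : ∀ i, 0 ∈ Ki i) :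
    0 ∈ cmpGenerators K₀ Ki :=
  ⟨0, h₀, 0, hK, by simp; rfl⟩

theorem CMP.add_mem (h₀ : IsCone K₀) (hK : ∀ i, IsCone (Ki i)) {T T'}
    (hT : T ∈ CMP K₀ Ki) (hT' : T' ∈ CMP K₀ Ki) : T + T' ∈ CMP K₀ Ki :=
  add_mem_convexHull_of_cone (smul_mem_cmpGenerators h₀ hK) hT hT'

theorem CMP.sum_mem (h₀ : IsCone K₀) (hK : ∀ i, IsCone (Ki i)) (h0₀ : 0 ∈ K₀)
    (h0 : ∀ i, 0 ∈ Ki i) {κ : Type*} (s : Finset κ)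
    {T : κ → Matrix ι₀ ι₀ ℝ × (Fin S → Matrix ι₁ ι₀ ℝ × Matrix ι₁ ι₁ ℝ)}
    (hT : ∀ l ∈ s, T l ∈ CMP K₀ Ki) : ∑ l ∈ s, T l ∈ CMP K₀ Ki :=
  sum_mem_convexHull_of_cone (smul_mem_cmpGenerators h₀ hK) (zero_mem_cmpGenerators h0₀ h0) s hT

theorem mk_mem_CMP_of_mem_convexHull_blockGenerators {u : ι₀ → ℝ} (hu : u ∈ K₀)
    {P : Fin S → Matrix ι₁ ι₀ ℝ × Matrix ι₁ ι₁ ℝ}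
    (hP : ∀ i, P i ∈ convexHull ℝ (blockGenerators (Ki i) u)) :
    (vecMulVec u u, P) ∈ CMP K₀ Ki := by
  have hconv : Convex ℝ {P | (vecMulVec u u, P) ∈ CMP K₀ Ki} := by
    intro P hP Q hQ a b ha hb hab
    have h := convex_convexHull ℝ _ hP hQ ha hb hab
    rwa [Prod.smul_mk, Prod.smul_mk, Prod.mk_add_mk, ← add_smul, hab, one_smul] at h
  have hpi : Set.univ.pi (fun i => blockGenerators (Ki i) u) ⊆
      {P | (vecMulVec u u, P) ∈ CMP K₀ Ki} := by
    intro P hP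
    choose y hy hPy using fun i => hP i (Set.mem_univ i)
    exact subset_convexHull ℝ _ ⟨u, hu, y, hy, by simp only [hPy]⟩
  refine convexHull_min hpi hconv ?_
  rw [convexHull_pi]
  exact fun i _ => hP i

theorem mk_zero_single_mem_CMP (h0₀ : 0 ∈ K₀) (h0 : ∀ i, 0 ∈ Ki i) {i : Fin S} {y : ι₁ → ℝ}
    (hy : y ∈ Ki i) : ((0 : Matrix ι₀ ι₀ ℝ), Pi.single i (0, vecMulVec y y)) ∈ CMP K₀ Ki := by
  refine subset_convexHull ℝ _ ⟨0, h0₀, Pi.single i y, fun j => ?_, ?_⟩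
  · rcases eq_or_ne j i with rfl | hj
    · simpa using hy
    · simpa [hj] using h0 j
  · refine Prod.ext (zero_vecMulVec 0).symm (funext fun j => ?_)
    rcases eq_or_ne j i with rfl | hj
    · ext : 1
      · ext; simp [vecMulVec_apply]
      · simp
    · simp [hj]
      rfl

end CMP

theorem stmt_8_general (n₁ n₂ S : ℕ) (hS : 1 ≤ S)
    (k : Fin n₁)
    (Ki : Fin S → Set (Fin n₂ → ℝ)) (hKi : ∀ i, IsCone (Ki i))
    (hne : ∀ i, (Ki i).Nonempty)
    (x : ℝ) (z : Fin S → Fin n₂ → ℝ)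
    (Y : Fin S → Matrix (Fin n₂) (Fin n₂) ℝ)
    (h : ∀ i, Matrix.fromBlocks (Matrix.of fun (_ _ : Fin 1) => x)
        (Matrix.of fun (_ : Fin 1) j => z i j) (Matrix.of fun a (_ : Fin 1) => z i a) (Y i)
        ∈ CPP (SetProd {v : Fin 1 → ℝ | 0 ≤ v 0} (Ki i))) :
    (x • Matrix.vecMulVec (Pi.single k 1 : Fin n₁ → ℝ) (Pi.single k 1),
      fun i => (Matrix.vecMulVec (z i) (Pi.single k 1 : Fin n₁ → ℝ), Y i))
      ∈ CMP {v : Fin n₁ → ℝ | ∀ a, 0 ≤ v a} Ki := by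
  have hK₀ : IsCone {v : Fin n₁ → ℝ | ∀ a, 0 ≤ v a} := fun c hc v hv a => mul_nonneg hc (hv a)
  have h0₀ : (0 : Fin n₁ → ℝ) ∈ {v : Fin n₁ → ℝ | ∀ a, 0 ≤ v a} := fun _ => le_rfl
  have h0 : ∀ i, (0 : Fin n₂ → ℝ) ∈ Ki i := fun i => (hKi i).zero_mem (hne i)
  choose r t w ht hw hx hz hY using fun i => exists_decomposition_of_mem_CPP (h i)
  set e : Fin n₁ → ℝ := Pi.single k 1
  have hx0 : 0 ≤ x := hx ⟨0, hS⟩ ▸ sum_nonneg fun l _ => sq_nonneg _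
  have hu : √x • e ∈ {v : Fin n₁ → ℝ | ∀ a, 0 ≤ v a} := hK₀ _ (Real.sqrt_nonneg x) e
    fun a => by by_cases ha : a = k <;> simp [e, ha]
  have hmain : (vecMulVec (√x • e) (√x • e),
      fun i => (vecMulVec (z i) e, ∑ l with t i l ≠ 0, vecMulVec (w i l) (w i l))) ∈
        CMP {v : Fin n₁ → ℝ | ∀ a, 0 ≤ v a} Ki :=
    mk_mem_CMP_of_mem_convexHull_blockGenerators hu fun i => by
      simpa only [← hx i, ← hz i] using
        mem_convexHull_blockGenerators (hKi i) (h0 i) (ht i) (hw i) e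
  have hrest : ∑ i, ∑ l with t i l = 0,
      ((0 : Matrix (Fin n₁) (Fin n₁) ℝ), Pi.single i (0, vecMulVec (w i l) (w i l))) ∈
        CMP {v : Fin n₁ → ℝ | ∀ a, 0 ≤ v a} Ki :=
    CMP.sum_mem hK₀ hKi h0₀ h0 _ fun i _ => CMP.sum_mem hK₀ hKi h0₀ h0 _ fun l _ =>
      mk_zero_single_mem_CMP h0₀ h0 (hw i l)
  convert CMP.add_mem hK₀ hKi hmain hrest using 1
  refine Prod.ext ?_ (funext fun j => Prod.ext ?_ ?_)
  · simp [smul_vecMulVec_eq_vecMulVec_sqrt_smul x hx0, Prod.fst_sum]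
  · simp [Prod.snd_sum, Prod.fst_sum, Pi.single_apply]
  · dsimp only
    rw [hY j, ← sum_filter_not_add_sum_filter _ (fun l => t j l = 0)]
    simp [Prod.snd_sum, Finset.sum_apply, Pi.single_apply]

theorem stmt_8 (n₁ n₂ S : ℕ) (h₁ : 1 ≤ n₁) (h₂ : 1 ≤ n₂) (hS : 1 ≤ S)
    (k : Fin n₁)
    (Ki : Fin S → Set (Fin n₂ → ℝ)) (hKi : ∀ i, IsCone (Ki i))
    (hne : ∀ i, (Ki i).Nonempty)
    (x : ℝ) (z : Fin S → Fin n₂ → ℝ)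
    (Y : Fin S → Matrix (Fin n₂) (Fin n₂) ℝ) (hY : ∀ i, (Y i).IsSymm)
    (h : ∀ i, Matrix.fromBlocks (Matrix.of fun (_ _ : Fin 1) => x)
        (Matrix.of fun (_ : Fin 1) j => z i j) (Matrix.of fun a (_ : Fin 1) => z i a) (Y i)
        ∈ CPP (SetProd {v : Fin 1 → ℝ | 0 ≤ v 0} (Ki i))) :
    (x • Matrix.vecMulVec (Pi.single k 1 : Fin n₁ → ℝ) (Pi.single k 1),
      fun i => (Matrix.vecMulVec (z i) (Pi.single k 1 : Fin n₁ → ℝ), Y i))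
      ∈ CMP {v : Fin n₁ → ℝ | ∀ a, 0 ≤ v a} Ki :=
  stmt_8_general n₁ n₂ S hS k Ki hKi hne x z Y h
end

section
/- Let n₁, n₂, S ≥ 1, let x ∈ ℝ^{n₁}, let X be a symmetric n₁×n₁ real matrix, and for each i ∈ {1,…,S} let y_i ∈ ℝ^{n₂}, Z_i ∈ ℝ^{n₂×n₁} and Y_i a symmetric n₂×n₂ real matrix. Suppose that for every i ∈ {1,…,S} the (1+n₁+n₂)×(1+n₁+n₂) block matrix [[1, xᵀ, y_iᵀ],[x, X, Z_iᵀ],[y_i, Z_i, Y_i]] is positive semidefinite. Then there exist real n₂×n₂ matrices Y_{ij} for i ≠ j with Y_{ji} = Y_{ij}ᵀ such that the (1+n₁+Sn₂)×(1+n₁+Sn₂) block matrix whose first block row is (1, xᵀ, y₁ᵀ, …, y_Sᵀ), whose second block row is (x, X, Z₁ᵀ, …, Z_Sᵀ), and whose block row for each i ∈ {1,…,S} is (y_i, Z_i, Y_{i1}, …, Y_{iS}) with Y_{ii} = Y_i, is positive semidefinite. -/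
open Matrix

/-- The `(1+n₁+n₂) × (1+n₁+n₂)` block matrix `[[1, xᵀ, yᵀ], [x, X, Zᵀ], [y, Z, Y]]`. -/
def smallArrow {n₁ n₂ : ℕ} (x : Fin n₁ → ℝ) (X : Matrix (Fin n₁) (Fin n₁) ℝ)
    (y : Fin n₂ → ℝ) (Z : Matrix (Fin n₂) (Fin n₁) ℝ) (Y : Matrix (Fin n₂) (Fin n₂) ℝ) :
    Matrix (Fin 1 ⊕ (Fin n₁ ⊕ Fin n₂)) (Fin 1 ⊕ (Fin n₁ ⊕ Fin n₂)) ℝ :=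
  Matrix.fromBlocks (Matrix.of fun _ _ => 1)
    (Matrix.of fun _ j => Sum.elim x y j)
    (Matrix.of fun i _ => Sum.elim x y i)
    (Matrix.fromBlocks X Zᵀ Z Y)

/-- The `(1+n₁+S·n₂) × (1+n₁+S·n₂)` block matrix with first block row
`(1, xᵀ, y₁ᵀ, …, y_Sᵀ)`, second block row `(x, X, Z₁ᵀ, …, Z_Sᵀ)`, and block row
`(y_i, Z_i, Y_{i1}, …, Y_{iS})` for each `i`. -/
def bigArrow {n₁ n₂ S : ℕ} (x : Fin n₁ → ℝ) (X : Matrix (Fin n₁) (Fin n₁) ℝ)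
    (y : Fin S → Fin n₂ → ℝ) (Z : Fin S → Matrix (Fin n₂) (Fin n₁) ℝ)
    (Yb : Fin S → Fin S → Matrix (Fin n₂) (Fin n₂) ℝ) :
    Matrix (Fin 1 ⊕ (Fin n₁ ⊕ Fin S × Fin n₂)) (Fin 1 ⊕ (Fin n₁ ⊕ Fin S × Fin n₂)) ℝ :=
  Matrix.fromBlocks (Matrix.of fun _ _ => 1)
    (Matrix.of fun _ j => Sum.elim x (fun p => y p.1 p.2) j)
    (Matrix.of fun i _ => Sum.elim x (fun p => y p.1 p.2) i)
    (Matrix.fromBlocks X (Matrix.of fun i p => Z p.1 p.2 i)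
      (Matrix.of fun p j => Z p.1 p.2 j) (Matrix.of fun p q => Yb p.1 q.1 p.2 q.2))

/-!
Write `A = [[1, xᵀ], [x, X]]` and `B_i = [y_i, Z_i]`, so that the `i`-th hypothesis reads
`[[A, B_iᵀ], [B_i, Y_i]] ⪰ 0`. Fix a symmetric generalized inverse `P` of `A` (`A P A = A`).
Positive semidefiniteness forces `ker A ⊆ ker B_i`, hence `B_i P A = B_i`, and makes the Schur
complements `G_i = Y_i - B_i P B_iᵀ` positive semidefinite. With `Y_ij = B_i P B_jᵀ` for `i ≠ j`,
the completed matrix is `Kᵀ A K + diag(0, G_1, …, G_S)` where `K = [1, P B_1ᵀ, …, P B_Sᵀ]`.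
-/

namespace Matrix

open scoped MatrixOrder ComplexOrder

variable {𝕜 : Type*} [RCLike 𝕜] {m k : Type*} [Fintype m] [Fintype k]

theorem IsHermitian.exists_isHermitian_mul_mul_self_eq [DecidableEq m] {A : Matrix m m 𝕜}
    (hA : A.IsHermitian) : ∃ P : Matrix m m 𝕜, P.IsHermitian ∧ A * P * A = A := by
  refine ⟨cfc (·⁻¹ : ℝ → ℝ) A, cfc_predicate _ A, ?_⟩
  -- The spectrum is finite, so `(·⁻¹)` is continuous on it; and `t * t⁻¹ * t = t` also at
  -- `t = 0`, since `0⁻¹ = 0`.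
  have hfin := A.finite_real_spectrum
  nth_rw 1 [← cfc_id' ℝ A, ← cfc_mul _ _ A (hfin.continuousOn _) (hfin.continuousOn _)]
  nth_rw 2 [← cfc_id' ℝ A]
  rw [← cfc_mul _ _ A (hfin.continuousOn _) (hfin.continuousOn _)]
  simp only [mul_inv_mul_cancel, cfc_id' ℝ A]

theorem PosSemidef.fromBlocks_mulVec_eq_zero {A : Matrix m m 𝕜} {B : Matrix k m 𝕜}
    {D : Matrix k k 𝕜} (hM : (fromBlocks A Bᴴ B D).PosSemidef) {v : m → 𝕜}
    (hv : A *ᵥ v = 0) : B *ᵥ v = 0 := by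
  have hquad : star (Sum.elim v 0) ⬝ᵥ fromBlocks A Bᴴ B D *ᵥ Sum.elim v 0 = 0 := by
    simp [fromBlocks_mulVec, hv, Function.star_sumElim, sumElim_dotProduct_sumElim]
  have := congrArg (· ∘ Sum.inr) ((hM.dotProduct_mulVec_zero_iff _).mp hquad)
  simpa [fromBlocks_mulVec] using this

theorem PosSemidef.mul_mul_eq_self_of_fromBlocks {A P : Matrix m m 𝕜} {B : Matrix k m 𝕜}
    {D : Matrix k k 𝕜} (hM : (fromBlocks A Bᴴ B D).PosSemidef) (hAPA : A * P * A = A) :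
    B * P * A = B := by
  rw [ext_iff_mulVec]
  intro v
  have hker : A *ᵥ (v - (P * A) *ᵥ v) = 0 := by
    rw [mulVec_sub, mulVec_mulVec, ← Matrix.mul_assoc, hAPA, sub_self]
  have := hM.fromBlocks_mulVec_eq_zero hker
  rwa [mulVec_sub, mulVec_mulVec, sub_eq_zero, eq_comm, ← Matrix.mul_assoc] at this

theorem PosSemidef.sub_mul_mul_conjTranspose_of_fromBlocks [DecidableEq k] {A P : Matrix m m 𝕜}
    {B : Matrix k m 𝕜} {D : Matrix k k 𝕜} (hM : (fromBlocks A Bᴴ B D).PosSemidef)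
    (hP : P.IsHermitian) (hAPA : A * P * A = A) : (D - B * P * Bᴴ).PosSemidef := by
  have hA : A.IsHermitian := (isHermitian_fromBlocks_iff.mp hM.isHermitian).1
  have hAPB : A * P * Bᴴ = Bᴴ := by
    simpa [conjTranspose_mul, hA.eq, hP.eq, Matrix.mul_assoc] using
      congrArg (·ᴴ) (hM.mul_mul_eq_self_of_fromBlocks hAPA)
  have hMC : fromBlocks A Bᴴ B D * fromRows (-(P * Bᴴ)) (1 : Matrix k k 𝕜) =
      fromRows 0 (D - B * P * Bᴴ) := by
    rw [fromBlocks_mul_fromRows]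
    simp [← Matrix.mul_assoc, hAPB, sub_eq_neg_add]
  have := hM.conjTranspose_mul_mul_same (fromRows (-(P * Bᴴ)) (1 : Matrix k k 𝕜))
  rwa [Matrix.mul_assoc, hMC, conjTranspose_fromRows_eq_fromCols_conjTranspose,
    fromCols_mul_fromRows, Matrix.mul_zero, zero_add, conjTranspose_one, Matrix.one_mul] at this

theorem PosSemidef.fromBlocks_mul_mul_conjTranspose [DecidableEq m] {A P : Matrix m m 𝕜}
    {B : Matrix k m 𝕜} (hA : A.PosSemidef) (hP : P.IsHermitian) (hBPA : B * P * A = B) :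
    (fromBlocks A Bᴴ B (B * P * Bᴴ)).PosSemidef := by
  have hAPB : A * P * Bᴴ = Bᴴ := by
    simpa [conjTranspose_mul, hA.isHermitian.eq, hP.eq, Matrix.mul_assoc] using
      congrArg (·ᴴ) hBPA
  have hK : (fromCols 1 (P * Bᴴ))ᴴ * A * fromCols 1 (P * Bᴴ) =
      fromBlocks A Bᴴ B (B * P * Bᴴ) := by
    simp [conjTranspose_fromCols_eq_fromRows_conjTranspose, fromRows_mul, conjTranspose_mul, hP.eq,
      ← Matrix.mul_assoc, hAPB, hBPA]
  exact hK ▸ hA.conjTranspose_mul_mul_same _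

theorem PosSemidef.blockDiagonal [DecidableEq k] {ι : Type*} [Fintype ι] [DecidableEq ι]
    {G : ι → Matrix k k 𝕜} (hG : ∀ i, (G i).PosSemidef) :
    (Matrix.blockDiagonal G).PosSemidef := by
  choose R hR using fun i => CStarAlgebra.nonneg_iff_eq_star_mul_self.mp (hG i).nonneg
  have : Matrix.blockDiagonal G = (Matrix.blockDiagonal R)ᴴ * Matrix.blockDiagonal R := by
    rw [blockDiagonal_conjTranspose, ← blockDiagonal_mul]
    exact congrArg _ (funext hR)
  exact this ▸ posSemidef_conjTranspose_mul_self _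

theorem PosSemidef.fromBlocks_zero_zero_zero [DecidableEq k] {Q : Matrix k k 𝕜}
    (hQ : Q.PosSemidef) : (fromBlocks (0 : Matrix m m 𝕜) 0 0 Q).PosSemidef := by
  set L : Matrix k (m ⊕ k) 𝕜 := fromCols 0 1
  have : Lᴴ * Q * L = fromBlocks 0 0 0 Q := by
    rw [conjTranspose_fromCols_eq_fromRows_conjTranspose, fromRows_mul, fromRows_mul_fromCols]
    simp
  exact this ▸ hQ.conjTranspose_mul_mul_same _

theorem exists_posSemidef_fromBlocks_of_forall [DecidableEq m] [DecidableEq k]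
    {ι : Type*} [Fintype ι] [DecidableEq ι]
    {A : Matrix m m 𝕜} {B : ι → Matrix k m 𝕜} {D : ι → Matrix k k 𝕜} (hA : A.PosSemidef)
    (h : ∀ i, (fromBlocks A (B i)ᴴ (B i) (D i)).PosSemidef) :
    ∃ E : ι → ι → Matrix k k 𝕜, (∀ i, E i i = D i) ∧ (∀ i j, E j i = (E i j)ᴴ) ∧
      (fromBlocks A (of fun (p : ι × k) a => B p.1 p.2 a)ᴴ
        (of fun (p : ι × k) a => B p.1 p.2 a)
        (of fun (p q : ι × k) => E p.1 q.1 p.2 q.2)).PosSemidef := by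
  obtain ⟨P, hP, hAPA⟩ := IsHermitian.exists_isHermitian_mul_mul_self_eq hA.isHermitian
  set Bs : Matrix (ι × k) m 𝕜 := of fun p a => B p.1 p.2 a
  have hBsPA : Bs * P * A = Bs := by
    ext p a
    exact congrFun₂ ((h p.1).mul_mul_eq_self_of_fromBlocks hAPA) p.2 a
  set G : ι → Matrix k k 𝕜 := fun i => D i - B i * P * (B i)ᴴ
  refine ⟨fun i j => if i = j then D i else B i * P * (B j)ᴴ, fun i => if_pos rfl, ?_, ?_⟩
  · intro i j
    by_cases hij : i = j
    · subst hij
      simp [(isHermitian_fromBlocks_iff.mp (h i).isHermitian).2.2.2.eq]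
    · simp [hij, Ne.symm hij, conjTranspose_mul, hP.eq, Matrix.mul_assoc]
  · have hsplit :
        (of fun (p q : ι × k) => (if p.1 = q.1 then D p.1 else B p.1 * P * (B q.1)ᴴ) p.2 q.2) =
          Bs * P * Bsᴴ + (blockDiagonal G).submatrix Prod.swap Prod.swap := by
      ext ⟨i, a⟩ ⟨j, b⟩
      have hBs : (Bs * P * Bsᴴ) (i, a) (j, b) = (B i * P * (B j)ᴴ) a b := rfl
      by_cases hij : i = j
      · subst hij
        simp [hBs, G, blockDiagonal_apply]
      · simp [hij, hBs, blockDiagonal_apply]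
    have hQ : ((blockDiagonal G).submatrix Prod.swap Prod.swap).PosSemidef :=
      (PosSemidef.blockDiagonal fun i =>
        (h i).sub_mul_mul_conjTranspose_of_fromBlocks hP hAPA).submatrix _
    have := (hA.fromBlocks_mul_mul_conjTranspose hP hBsPA).add
      (hQ.fromBlocks_zero_zero_zero (m := m))
    rwa [fromBlocks_add, add_zero, add_zero, add_zero, ← hsplit] at this

end Matrix

def arrowHead {n₁ : ℕ} (x : Fin n₁ → ℝ) (X : Matrix (Fin n₁) (Fin n₁) ℝ) :
    Matrix (Fin 1 ⊕ Fin n₁) (Fin 1 ⊕ Fin n₁) ℝ :=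
  fromBlocks (of fun _ _ => 1) (of fun _ j => x j) (of fun i _ => x i) X

def arrowRow {n₁ n₂ : ℕ} (y : Fin n₂ → ℝ) (Z : Matrix (Fin n₂) (Fin n₁) ℝ) :
    Matrix (Fin n₂) (Fin 1 ⊕ Fin n₁) ℝ :=
  fromCols (of fun b _ => y b) Z

theorem smallArrow_eq_submatrix {n₁ n₂ : ℕ} (x : Fin n₁ → ℝ) (X : Matrix (Fin n₁) (Fin n₁) ℝ)
    (y : Fin n₂ → ℝ) (Z : Matrix (Fin n₂) (Fin n₁) ℝ) (Y : Matrix (Fin n₂) (Fin n₂) ℝ) :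
    smallArrow x X y Z Y =
      (fromBlocks (arrowHead x X) (arrowRow y Z)ᴴ (arrowRow y Z) Y).submatrix
        (Equiv.sumAssoc _ _ _).symm (Equiv.sumAssoc _ _ _).symm := by
  ext (a | a | a) (b | b | b) <;> simp [smallArrow, arrowHead, arrowRow]

theorem bigArrow_eq_submatrix {n₁ n₂ S : ℕ} (x : Fin n₁ → ℝ) (X : Matrix (Fin n₁) (Fin n₁) ℝ)
    (y : Fin S → Fin n₂ → ℝ) (Z : Fin S → Matrix (Fin n₂) (Fin n₁) ℝ)
    (Yb : Fin S → Fin S → Matrix (Fin n₂) (Fin n₂) ℝ) :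
    bigArrow x X y Z Yb =
      (fromBlocks (arrowHead x X)
        (of fun (p : Fin S × Fin n₂) a => arrowRow (y p.1) (Z p.1) p.2 a)ᴴ
        (of fun (p : Fin S × Fin n₂) a => arrowRow (y p.1) (Z p.1) p.2 a)
        (of fun (p q : Fin S × Fin n₂) => Yb p.1 q.1 p.2 q.2)).submatrix
        (Equiv.sumAssoc _ _ _).symm (Equiv.sumAssoc _ _ _).symm := by
  ext (a | a | a) (b | b | b) <;> simp [bigArrow, arrowHead, arrowRow]

theorem stmt_10_general (n₁ n₂ S : ℕ) (hS : 1 ≤ S)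
    (x : Fin n₁ → ℝ) (X : Matrix (Fin n₁) (Fin n₁) ℝ)
    (y : Fin S → Fin n₂ → ℝ) (Z : Fin S → Matrix (Fin n₂) (Fin n₁) ℝ)
    (Y : Fin S → Matrix (Fin n₂) (Fin n₂) ℝ)
    (h : ∀ i, (smallArrow x X (y i) (Z i) (Y i)).PosSemidef) :
    ∃ Yb : Fin S → Fin S → Matrix (Fin n₂) (Fin n₂) ℝ,
      (∀ i, Yb i i = Y i) ∧ (∀ i j, Yb j i = (Yb i j)ᵀ) ∧
      (bigArrow x X y Z Yb).PosSemidef := by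
  have hblocks : ∀ i, (fromBlocks (arrowHead x X) (arrowRow (y i) (Z i))ᴴ (arrowRow (y i) (Z i))
      (Y i)).PosSemidef := fun i =>
    (posSemidef_submatrix_equiv _).mp (smallArrow_eq_submatrix .. ▸ h i)
  have hhead : (arrowHead x X).PosSemidef := (hblocks ⟨0, hS⟩).submatrix Sum.inl
  obtain ⟨Yb, hdiag, hsymm, hpsd⟩ := exists_posSemidef_fromBlocks_of_forall hhead hblocks
  refine ⟨Yb, hdiag, fun i j => by simpa using hsymm i j, ?_⟩
  rw [bigArrow_eq_submatrix]
  exact (posSemidef_submatrix_equiv _).mpr hpsd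

theorem stmt_10 (n₁ n₂ S : ℕ) (h₁ : 1 ≤ n₁) (h₂ : 1 ≤ n₂) (hS : 1 ≤ S)
    (x : Fin n₁ → ℝ) (X : Matrix (Fin n₁) (Fin n₁) ℝ)
    (y : Fin S → Fin n₂ → ℝ) (Z : Fin S → Matrix (Fin n₂) (Fin n₁) ℝ)
    (Y : Fin S → Matrix (Fin n₂) (Fin n₂) ℝ)
    (h : ∀ i, (smallArrow x X (y i) (Z i) (Y i)).PosSemidef) :
    ∃ Yb : Fin S → Fin S → Matrix (Fin n₂) (Fin n₂) ℝ,
      (∀ i, Yb i i = Y i) ∧ (∀ i j, Yb j i = (Yb i j)ᵀ) ∧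
      (bigArrow x X y Z Yb).PosSemidef :=
  stmt_10_general n₁ n₂ S hS x X y Z Y h
end

section
/- Let n₁, n₂, S be natural numbers with S > 1. Define the simple graph G on the vertex set V consisting of a set L of n₁ vertices together with S disjoint groups g₁,…,g_S of n₂ vertices each, where two distinct vertices u, v are adjacent if and only if at least one of them lies in L, or u and v lie in the same group g_i. Then G is chordal: every cycle in G of length at least 4 has a chord, i.e., for every closed walk in G that is a cycle of length ≥ 4 there exist two vertices visited by the cycle that are adjacent in G but whose connecting edge is not an edge of the cycle. -/
/-- The specification graph of an arrowhead partial matrix: vertices are `n₁`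
"leading" vertices (`Sum.inl`) together with `S` groups of `n₂` vertices each
(`Sum.inr (i, a)` lies in group `i`); two distinct vertices are adjacent iff at
least one of them is a leading vertex, or they lie in the same group. -/
def arrowGraph (n₁ n₂ S : ℕ) : SimpleGraph (Fin n₁ ⊕ Fin S × Fin n₂) where
  Adj u v := u ≠ v ∧ ((∃ a, u = Sum.inl a) ∨ (∃ a, v = Sum.inl a) ∨
    (∃ i a b, u = Sum.inr (i, a) ∧ v = Sum.inr (i, b)))
  symm := by
    constructor
    rintro u v ⟨h1, h2⟩
    refine ⟨h1.symm, ?_⟩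
    rcases h2 with h | h | ⟨i, a, b, ha, hb⟩
    · exact Or.inr (Or.inl h)
    · exact Or.inl h
    · exact Or.inr (Or.inr ⟨i, b, a, hb, ha⟩)
  loopless := by constructor; rintro u ⟨h1, _⟩; exact h1 rfl

/-!
Let `v₀ v₁ v₂ v₃` be consecutive vertices of a cycle of length at least four, so that neither
`v₀ v₂` nor `v₁ v₃` is an edge of the cycle. If `v₀ v₂` is an edge of the graph it is a chord.
Otherwise the distinct vertices `v₀`, `v₂` lie in different groups, so their common neighbour
`v₁` is a leading vertex; leading vertices are adjacent to every other vertex, so `v₁ v₃` is a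
chord.
-/

namespace SimpleGraph.Walk

variable {V : Type*} {G : SimpleGraph V} {u v : V}

theorem edges_eq_cons_tail_edges {p : G.Walk u v} (hp : ¬p.Nil) :
    p.edges = s(u, p.snd) :: p.tail.edges := by
  rw [← edges_cons (p.adj_snd hp), p.cons_tail_eq hp]

theorem IsCycle.mk_start_getVert_two_notMem_edges {c : G.Walk u u} (hc : c.IsCycle)
    (hlen : 4 ≤ c.length) : s(u, c.getVert 2) ∉ c.edges := by
  have hlen_tail := c.length_tail_add_one hc.not_nil
  rw [edges_eq_cons_tail_edges hc.not_nil, List.mem_cons, not_or, Sym2.congr_right]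
  refine ⟨fun h => ?_, fun h => ?_⟩
  · have := hc.getVert_injOn (by simp; omega) (by simp; omega) h
    omega
  · have := hc.isPath_tail.eq_penultimate_of_mem_edges h
    rw [penultimate, getVert_tail] at this
    have := hc.getVert_injOn (by simp; omega) (by simp; omega) this
    omega

theorem IsCycle.mk_snd_getVert_three_notMem_edges {c : G.Walk u u} (hc : c.IsCycle)
    (hlen : 4 ≤ c.length) : s(c.snd, c.getVert 3) ∉ c.edges := by
  rw [edges_eq_cons_tail_edges hc.not_nil, List.mem_cons, not_or, Sym2.eq_swap (a := u),
    Sym2.congr_right]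
  refine ⟨fun h => ?_, fun h => ?_⟩
  · have := (hc.getVert_endpoint_iff (by omega)).1 h
    omega
  · have := hc.isPath_tail.eq_snd_of_mem_edges h
    rw [snd, getVert_tail] at this
    have := hc.getVert_injOn (by simp; omega) (by simp; omega) this
    omega

end SimpleGraph.Walk

namespace arrowGraph

variable {n₁ n₂ S : ℕ}

theorem inl_adj {a : Fin n₁} {y : Fin n₁ ⊕ Fin S × Fin n₂} (h : Sum.inl a ≠ y) :
    (arrowGraph n₁ n₂ S).Adj (Sum.inl a) y :=
  ⟨h, Or.inl ⟨a, rfl⟩⟩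

theorem exists_eq_inl_of_not_adj {u w x : Fin n₁ ⊕ Fin S × Fin n₂}
    (huw : (arrowGraph n₁ n₂ S).Adj u w) (hwx : (arrowGraph n₁ n₂ S).Adj w x) (hux : u ≠ x)
    (h : ¬(arrowGraph n₁ n₂ S).Adj u x) : ∃ a, w = Sum.inl a := by
  obtain ⟨a⟩ | ⟨i, a⟩ := u
  · exact absurd (inl_adj hux) h
  obtain ⟨b⟩ | ⟨j, b⟩ := x
  · exact absurd (inl_adj hux.symm).symm h
  obtain ⟨c⟩ | ⟨k, c⟩ := w
  · exact ⟨c, rfl⟩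
  obtain ⟨-, ⟨_, h₁⟩ | ⟨_, h₁⟩ | ⟨_, _, _, h₁, h₁'⟩⟩ := huw <;> try simp at h₁
  obtain ⟨-, ⟨_, h₂⟩ | ⟨_, h₂⟩ | ⟨_, _, _, h₂, h₂'⟩⟩ := hwx <;> try simp at h₂
  simp only [Sum.inr.injEq, Prod.mk.injEq] at h₁ h₁' h₂ h₂'
  exact absurd ⟨hux, Or.inr (Or.inr ⟨i, a, b, rfl, by rw [h₁.1, ← h₁'.1, h₂.1, ← h₂'.1]⟩)⟩ h

end arrowGraph

theorem stmt_11_general (n₁ n₂ S : ℕ)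
    (v : Fin n₁ ⊕ Fin S × Fin n₂) (c : (arrowGraph n₁ n₂ S).Walk v v)
    (hc : c.IsCycle) (hlen : 4 ≤ c.length) :
    ∃ a b, a ∈ c.support ∧ b ∈ c.support ∧ (arrowGraph n₁ n₂ S).Adj a b ∧
      s(a, b) ∉ c.edges := by
  by_cases h₀₂ : (arrowGraph n₁ n₂ S).Adj v (c.getVert 2)
  · exact ⟨v, c.getVert 2, c.start_mem_support, c.getVert_mem_support 2, h₀₂,
      hc.mk_start_getVert_two_notMem_edges hlen⟩
  refine ⟨c.snd, c.getVert 3, c.getVert_mem_support 1, c.getVert_mem_support 3, ?_,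
    hc.mk_snd_getVert_three_notMem_edges hlen⟩
  have hv₂ : v ≠ c.getVert 2 := by
    simpa using hc.getVert_sub_one_ne_getVert_add_one (i := 1) (by omega)
  have hv₁₃ : c.snd ≠ c.getVert 3 := hc.getVert_sub_one_ne_getVert_add_one (i := 2) (by omega)
  obtain ⟨a, ha⟩ := arrowGraph.exists_eq_inl_of_not_adj (c.adj_snd hc.not_nil)
    (c.adj_getVert_succ (i := 1) (by omega)) hv₂ h₀₂
  rw [ha]
  exact arrowGraph.inl_adj (ha ▸ hv₁₃)

theorem stmt_11 (n₁ n₂ S : ℕ) (hS : 1 < S)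
    (v : Fin n₁ ⊕ Fin S × Fin n₂) (c : (arrowGraph n₁ n₂ S).Walk v v)
    (hc : c.IsCycle) (hlen : 4 ≤ c.length) :
    ∃ a b, a ∈ c.support ∧ b ∈ c.support ∧ (arrowGraph n₁ n₂ S).Adj a b ∧
      s(a, b) ∉ c.edges :=
  stmt_11_general n₁ n₂ S v c hc hlen
end

section
/- Let S, n₁, n₂, K ≥ 1 and m₁,…,m_S ≥ 1. Let K₀ ⊆ ℝ^{n₁} and K_i ⊆ ℝ^{n₂} (i ∈ {1,…,S}) be closed convex cones, let F_i ∈ ℝ^{m_i×n₁}, G_i ∈ ℝ^{m_i×n₂}, r_i ∈ ℝ^{m_i}, and for j ∈ {1,…,K} let Q_j(x, y₁,…,y_S) = xᵀA^j x + (a^j)ᵀx + Σ_{i=1}^S ( xᵀ B_i^j y_i + y_iᵀ C_i^j y_i + (c_i^j)ᵀ y_i ) + d^j be quadratic functions (A^j, C_i^j symmetric; no bilinear terms between distinct y_i and y_j). Define 𝔽_i = {(x,y) ∈ K₀ × K_i : F_i x + G_i y = r_i} and assume each 𝔽_i is nonempty and bounded, and that whenever (x, y_i) ∈ 𝔽_i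 for all i ∈ {1,…,S} one has Q_j(x, y₁,…,y_S) ≥ 0 for all j ∈ {1,…,K}. Then the convex hull of the lifted feasible set L = {(x, x xᵀ, (y_i, y_i xᵀ, y_i y_iᵀ)_{i=1}^S) : (x, y_i) ∈ 𝔽_i for all i, and Q_j(x, y₁,…,y_S) = 0 for all j} equals the set of all tuples (x, X, (y_i, Z_i, Y_i)_{i=1}^S), with x ∈ ℝ^{n₁}, X symmetric n₁×n₁, y_i ∈ ℝ^{n₂}, Z_i ∈ ℝ^{n₂×n₁}, Y_i symmetric n₂×n₂, satisfying: (1) F_i x + G_i y_i = r_i for all i; (2) for all i, the vector of diagonal entries of (F_i G_i) [[X, Z_iᵀ],[Z_i, Y_i]] (F_i G_i)ᵀ equals the entrywise square r_i ∘ r_i; (3) for all j, A^j • X + (a^j)ᵀ x + Σ_{i=1}^S ( (B_i^j)ᵀ • Z_i + C_i^j • Y_i + (c_i^j)ᵀ y_i ) + d^j = 0, where M • N = trace(Mᵀ N); and (4) the connected component ( [[1, xᵀ],[x, X]], ( (y_i Z_i), Y_i )_{i=1}^S ), where (y_i Z_i) denotes the n₂×(1+n₁) matrix with first column y_i followed by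 the columns of Z_i, belongs to CMP(ℝ₊ × K₀, K₁,…,K_S). -/
open Matrix

/-- The Frobenius inner product `M • N = trace (Mᵀ N)` of two matrices. -/
def frob {m n : Type*} [Fintype m] [Fintype n] (A B : Matrix m n ℝ) : ℝ :=
  Matrix.trace (Aᵀ * B)

/-!
Every constraint of the relaxation is affine in the lifted point, so it passes from the lifts of
feasible points to their convex combinations.

Conversely, membership of the connected component in `CMP(ℝ₊ × K₀, K)` writes a point of the
relaxation as a convex combination `∑ w_k hlift(τ_k, u_k, η_k)` of lifts of homogeneous points
`(τ_k, u_k, η_k) ∈ ℝ₊ × K₀ × K` with `∑ w_k τ_k² = 1`. The linear constraints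
`F_i x + G_i y_i = r_i` and their squared versions on the diagonal then form the equality case of
the Cauchy–Schwarz inequality, so `F_i u_k + G_i η_k = τ_k r_i` for every atom. Atoms with
`τ_k = 0` are recession directions of the bounded sets `𝔽_i`, hence vanish; the others rescale
to feasible points, carrying weights `w_k τ_k²`. The quadratic constraints finally say that an
average of the nonnegative values `Q_j` at these points is zero, so each of them is zero.
-/

theorem IsCone.add_mem {ι : Type*} {K : Set (ι → ℝ)} (hK : IsCone K) (hKc : Convex ℝ K)
    {x y : ι → ℝ} (hx : x ∈ K) (hy : y ∈ K) : x + y ∈ K := by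
  have hmid := hKc hx hy (by norm_num : (0 : ℝ) ≤ 1 / 2) (by norm_num : (0 : ℝ) ≤ 1 / 2)
    (by norm_num)
  convert hK 2 zero_le_two _ hmid using 1
  module

theorem Bornology.IsBounded.eq_zero_of_add_smul_mem {E : Type*} [NormedAddCommGroup E]
    [NormedSpace ℝ E] {s : Set E} (hs : IsBounded s) {p v : E}
    (h : ∀ c : ℝ, 0 ≤ c → p + c • v ∈ s) : v = 0 := by
  obtain ⟨C, hC⟩ := isBounded_iff_forall_norm_le.1 hs
  by_contra hv
  have hv : 0 < ‖v‖ := norm_pos_iff.2 hv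
  have hp : ‖p‖ ≤ C := by simpa using hC _ (h 0 le_rfl)
  set c := (C + ‖p‖ + 1) / ‖v‖
  have hc : 0 ≤ c := div_nonneg (by linarith [norm_nonneg p]) hv.le
  have hcv : ‖c • v‖ ≤ C + ‖p‖ :=
    calc ‖c • v‖ = ‖(p + c • v) - p‖ := by rw [add_sub_cancel_left]
      _ ≤ ‖p + c • v‖ + ‖p‖ := norm_sub_le _ _
      _ ≤ C + ‖p‖ := by gcongr; exact hC _ (h c hc)
  rw [norm_smul, Real.norm_of_nonneg hc, div_mul_cancel₀ _ hv.ne'] at hcv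
  linarith

/-- Equality case of the weighted Cauchy–Schwarz inequality
`(∑ w α β)² ≤ (∑ w α²) (∑ w β²)`. -/
theorem eq_mul_of_sum_mul_sq_eq {κ : Type*} {s : Finset κ} {w α β : κ → ℝ} {c : ℝ}
    (hw : ∀ k ∈ s, 0 ≤ w k) (hα : ∑ k ∈ s, w k * α k ^ 2 = 1)
    (hαβ : ∑ k ∈ s, w k * (α k * β k) = c) (hβ : ∑ k ∈ s, w k * β k ^ 2 = c ^ 2) :
    ∀ k ∈ s, w k ≠ 0 → β k = c * α k := by
  have hsum : ∑ k ∈ s, w k * (β k - c * α k) ^ 2 = 0 := by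
    have hexp : ∀ k, w k * (β k - c * α k) ^ 2 =
        w k * β k ^ 2 - 2 * c * (w k * (α k * β k)) + c ^ 2 * (w k * α k ^ 2) := fun k => by ring
    simp only [hexp, Finset.sum_add_distrib, Finset.sum_sub_distrib, ← Finset.mul_sum, hα, hαβ, hβ]
    ring
  intro k hk hwk
  have hk := (Finset.sum_eq_zero_iff_of_nonneg fun k hk => mul_nonneg (hw k hk) (sq_nonneg _)).1
    hsum k hk
  rw [mul_eq_zero, or_iff_right hwk, sq_eq_zero_iff, sub_eq_zero] at hk
  exact hk

theorem sum_smul_mem_convexHull_of_ne_zero {E ι : Type*} [AddCommGroup E] [Module ℝ E]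
    [Fintype ι] {s : Set E} {w : ι → ℝ} {z : ι → E} (hw : ∀ i, 0 ≤ w i) (hw1 : ∑ i, w i = 1)
    (hz : ∀ i, w i ≠ 0 → z i ∈ s) : ∑ i, w i • z i ∈ convexHull ℝ s := by
  classical
  rw [← Finset.sum_filter_of_ne fun i _ (h : w i • z i ≠ 0) => left_ne_zero_of_smul h]
  refine (convex_convexHull ℝ s).sum_mem (fun i _ => hw i) ?_ fun i hi =>
    subset_convexHull ℝ s (hz i (Finset.mem_filter.1 hi).2)
  rwa [Finset.sum_filter_ne_zero]

theorem LinearMap.map_sum_smul_of_forall_eq {E F ι : Type*} [AddCommGroup E] [Module ℝ E]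
    [AddCommGroup F] [Module ℝ F] [Fintype ι] (L : E →ₗ[ℝ] F) {w : ι → ℝ} (hw1 : ∑ i, w i = 1)
    {z : ι → E} {b : F} (h : ∀ i, L (z i) = b) : L (∑ i, w i • z i) = b := by
  simp [h, ← Finset.sum_smul, hw1]

theorem LinearMap.eq_of_map_sum_smul_add_eq_zero {E ι : Type*} [AddCommGroup E] [Module ℝ E]
    [Fintype ι] (L : E →ₗ[ℝ] ℝ) (d : ℝ) {w : ι → ℝ} {z : ι → E} (hw : ∀ i, 0 ≤ w i)
    (hw1 : ∑ i, w i = 1) (hnonneg : ∀ i, w i ≠ 0 → 0 ≤ L (z i) + d)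
    (h : L (∑ i, w i • z i) + d = 0) : ∀ i, w i ≠ 0 → L (z i) + d = 0 := by
  have hterm : ∀ i, 0 ≤ w i * (L (z i) + d) := fun i => by
    rcases eq_or_ne (w i) 0 with hi | hi
    · simp [hi]
    · exact mul_nonneg (hw i) (hnonneg i hi)
  have hsum : ∑ i, w i * (L (z i) + d) = 0 := by
    simpa [mul_add, Finset.sum_add_distrib, ← Finset.sum_mul, hw1] using h
  intro i hi
  exact (mul_eq_zero.1 ((Finset.sum_eq_zero_iff_of_nonneg fun i _ => hterm i).1 hsum i
    (Finset.mem_univ i))).resolve_left hi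

theorem frob_vecMulVec {m n : Type*} [Fintype m] [Fintype n] (A : Matrix m n ℝ) (u : m → ℝ)
    (v : n → ℝ) : frob A (vecMulVec u v) = u ⬝ᵥ A *ᵥ v := by
  rw [frob, mul_vecMulVec, trace_vecMulVec, mulVec_transpose, dotProduct_mulVec]

section Lifting

variable {ι₀ ι₁ σ : Type*}

/-- The space of tuples `(x, X, (y_i, Z_i, Y_i)_{i ∈ σ})`. -/
abbrev LiftSpace (ι₀ ι₁ σ : Type*) : Type _ :=
  (ι₀ → ℝ) × Matrix ι₀ ι₀ ℝ × (σ → (ι₁ → ℝ) × Matrix ι₁ ι₀ ℝ × Matrix ι₁ ι₁ ℝ)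

def lift (x : ι₀ → ℝ) (y : σ → ι₁ → ℝ) : LiftSpace ι₀ ι₁ σ :=
  (x, vecMulVec x x, fun i => (y i, vecMulVec (y i) x, vecMulVec (y i) (y i)))

/-- The lift of the homogeneous point `(τ, u, η)`, which stands for `(u / τ, η / τ)`. -/
def hlift (τ : ℝ) (u : ι₀ → ℝ) (η : σ → ι₁ → ℝ) : LiftSpace ι₀ ι₁ σ :=
  (τ • u, vecMulVec u u, fun i => (τ • η i, vecMulVec (η i) u, vecMulVec (η i) (η i)))

theorem hlift_one (x : ι₀ → ℝ) (y : σ → ι₁ → ℝ) : hlift 1 x y = lift x y := by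
  simp [hlift, lift]

theorem hlift_eq_sq_smul_lift {τ : ℝ} {u : ι₀ → ℝ} {η : σ → ι₁ → ℝ}
    (h : τ = 0 → u = 0 ∧ η = 0) :
    hlift τ u η = τ ^ 2 • lift (τ⁻¹ • u) (fun i => τ⁻¹ • η i) := by
  rcases eq_or_ne τ 0 with rfl | hτ
  · obtain ⟨rfl, rfl⟩ := h rfl
    ext <;> simp [hlift]
  · ext <;> simp [hlift, lift, smul_smul, sq, hτ, mul_mul_mul_comm τ τ τ⁻¹]

theorem fromBlocks_vecMulVec (u : ι₀ → ℝ) (v : ι₁ → ℝ) :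
    fromBlocks (vecMulVec u u) (vecMulVec v u)ᵀ (vecMulVec v u) (vecMulVec v v) =
      vecMulVec (Sum.elim u v) (Sum.elim u v) := by
  ext (a | a) (b | b) <;> simp [vecMulVec_apply, mul_comm]

variable [Fintype ι₀] [Fintype ι₁]

def linConstraint {μ : Type*} (F : Matrix μ ι₀ ℝ) (G : Matrix μ ι₁ ℝ) (i : σ) :
    LiftSpace ι₀ ι₁ σ →ₗ[ℝ] μ → ℝ where
  toFun t := F *ᵥ t.1 + G *ᵥ (t.2.2 i).1
  map_add' t t' := by simp only [Prod.fst_add, Prod.snd_add, Pi.add_apply, mulVec_add]; abel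
  map_smul' c t := by simp [mulVec_smul]

def momentMatrix {μ : Type*} (F : Matrix μ ι₀ ℝ) (G : Matrix μ ι₁ ℝ) (i : σ) :
    LiftSpace ι₀ ι₁ σ →ₗ[ℝ] Matrix μ μ ℝ where
  toFun t := fromCols F G * fromBlocks t.2.1 (t.2.2 i).2.1ᵀ (t.2.2 i).2.1 (t.2.2 i).2.2 *
    (fromCols F G)ᵀ
  map_add' t t' := by
    simp only [Prod.fst_add, Prod.snd_add, Pi.add_apply, transpose_add, ← fromBlocks_add,
      Matrix.mul_add, Matrix.add_mul]
  map_smul' c t := by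
    simp only [Prod.smul_fst, Prod.smul_snd, Pi.smul_apply, transpose_smul, ← fromBlocks_smul,
      Matrix.mul_smul, Matrix.smul_mul, RingHom.id_apply]

def quadForm [Fintype σ] (A : Matrix ι₀ ι₀ ℝ) (a : ι₀ → ℝ) (B : σ → Matrix ι₀ ι₁ ℝ)
    (C : σ → Matrix ι₁ ι₁ ℝ) (c : σ → ι₁ → ℝ) : LiftSpace ι₀ ι₁ σ →ₗ[ℝ] ℝ where
  toFun t := frob A t.2.1 + a ⬝ᵥ t.1 +
    ∑ i, (frob (B i)ᵀ (t.2.2 i).2.1 + frob (C i) (t.2.2 i).2.2 + c i ⬝ᵥ (t.2.2 i).1)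
  map_add' t t' := by
    simp only [frob, Prod.fst_add, Prod.snd_add, Pi.add_apply, Matrix.mul_add, trace_add,
      dotProduct_add, Finset.sum_add_distrib]
    ring
  map_smul' c t := by
    simp only [frob, Prod.smul_fst, Prod.smul_snd, Pi.smul_apply, Matrix.mul_smul, trace_smul,
      dotProduct_smul, smul_eq_mul, RingHom.id_apply, Finset.mul_sum, mul_add]

theorem linConstraint_hlift {μ : Type*} (F : Matrix μ ι₀ ℝ) (G : Matrix μ ι₁ ℝ) (i : σ) (τ : ℝ)
    (u : ι₀ → ℝ) (η : σ → ι₁ → ℝ) :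
    linConstraint F G i (hlift τ u η) = τ • (F *ᵥ u + G *ᵥ η i) := by
  simp [linConstraint, hlift, mulVec_smul]

theorem momentMatrix_hlift {μ : Type*} (F : Matrix μ ι₀ ℝ) (G : Matrix μ ι₁ ℝ) (i : σ) (τ : ℝ)
    (u : ι₀ → ℝ) (η : σ → ι₁ → ℝ) :
    momentMatrix F G i (hlift τ u η) = vecMulVec (F *ᵥ u + G *ᵥ η i) (F *ᵥ u + G *ᵥ η i) := by
  simp only [momentMatrix, hlift, LinearMap.coe_mk, AddHom.coe_mk, fromBlocks_vecMulVec,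
    mul_vecMulVec, vecMulVec_mul, vecMul_transpose, fromCols_mulVec_sumElim]

theorem quadForm_lift [Fintype σ] (A : Matrix ι₀ ι₀ ℝ) (a : ι₀ → ℝ) (B : σ → Matrix ι₀ ι₁ ℝ)
    (C : σ → Matrix ι₁ ι₁ ℝ) (c : σ → ι₁ → ℝ) (x : ι₀ → ℝ) (y : σ → ι₁ → ℝ) :
    quadForm A a B C c (lift x y) = x ⬝ᵥ A *ᵥ x + a ⬝ᵥ x +
      ∑ i, (x ⬝ᵥ B i *ᵥ y i + y i ⬝ᵥ C i *ᵥ y i + c i ⬝ᵥ y i) := by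
  simp only [quadForm, lift, LinearMap.coe_mk, AddHom.coe_mk, frob_vecMulVec, mulVec_transpose,
    dotProduct_comm (y _) (vecMul _ _), ← dotProduct_mulVec]

end Lifting

section Component

variable {ι₀ ι₁ σ : Type*}

/-- `component (c, t)` is the connected component of `t` with `c` in place of the top-left `1`;
adding this coordinate makes it linear. -/
def component : ℝ × LiftSpace ι₀ ι₁ σ →ₗ[ℝ]
    Matrix (Fin 1 ⊕ ι₀) (Fin 1 ⊕ ι₀) ℝ × (σ → Matrix ι₁ (Fin 1 ⊕ ι₀) ℝ × Matrix ι₁ ι₁ ℝ) where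
  toFun p := (fromBlocks (of fun (_ _ : Fin 1) => p.1) (of fun (_ : Fin 1) j => p.2.1 j)
      (of fun i (_ : Fin 1) => p.2.1 i) p.2.2.1,
    fun i => (fromCols (of fun a (_ : Fin 1) => (p.2.2.2 i).1 a) (p.2.2.2 i).2.1,
      (p.2.2.2 i).2.2))
  map_add' p q := Prod.ext (by ext (a | a) (b | b) <;> rfl)
    (funext fun i => Prod.ext (by ext a (b | b) <;> rfl) rfl)
  map_smul' c p := Prod.ext (by ext (a | a) (b | b) <;> rfl)
    (funext fun i => Prod.ext (by ext a (b | b) <;> rfl) rfl)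

theorem component_injective : Function.Injective (component (ι₀ := ι₀) (ι₁ := ι₁) (σ := σ)) := by
  intro p q h
  have h₀ := fun a b => congrFun (congrFun (congrArg Prod.fst h) a) b
  have h₁ := fun i a b => congrFun (congrFun (congrArg (fun M => (M.2 i).1) h) a) b
  have h₂ := fun i => congrArg (fun M => (M.2 i).2) h
  ext
  · exact h₀ (.inl 0) (.inl 0)
  · exact h₀ (.inr _) (.inl 0)
  · exact h₀ (.inr _) (.inr _)
  · exact h₁ _ _ (.inl 0)
  · exact h₁ _ _ (.inr _)
  · exact congrFun (congrFun (h₂ _) _) _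

theorem vecMulVec_eq_component (ξ : Fin 1 ⊕ ι₀ → ℝ) (η : σ → ι₁ → ℝ) :
    ((vecMulVec ξ ξ, fun i => (vecMulVec (η i) ξ, vecMulVec (η i) (η i))) :
      Matrix (Fin 1 ⊕ ι₀) (Fin 1 ⊕ ι₀) ℝ × (σ → Matrix ι₁ (Fin 1 ⊕ ι₀) ℝ × Matrix ι₁ ι₁ ℝ)) =
      component (ξ (.inl 0) ^ 2, hlift (ξ (.inl 0)) (fun j => ξ (.inr j)) η) := by
  have hξ : ∀ a : Fin 1, ξ (.inl a) = ξ (.inl 0) := fun a => by rw [Subsingleton.elim a 0]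
  refine Prod.ext ?_ (funext fun i => Prod.ext ?_ rfl)
  · ext (a | a) (b | b) <;> simp [component, hlift, vecMulVec_apply, hξ, sq, mul_comm]
  · ext a (b | b) <;> simp [component, hlift, vecMulVec_apply, hξ, mul_comm]

theorem component_mem_CMP_iff {S : ℕ} {K₀ : Set (ι₀ → ℝ)} {K : Fin S → Set (ι₁ → ℝ)}
    {t : LiftSpace ι₀ ι₁ (Fin S)} :
    component (1, t) ∈ CMP (SetProd {v : Fin 1 → ℝ | 0 ≤ v 0} K₀) K ↔
      ∃ (κ : Type) (_ : Fintype κ) (w τ : κ → ℝ) (u : κ → ι₀ → ℝ) (η : κ → Fin S → ι₁ → ℝ),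
        (∀ k, 0 ≤ w k) ∧ ∑ k, w k = 1 ∧ (∀ k, 0 ≤ τ k) ∧ (∀ k, u k ∈ K₀) ∧
        (∀ k i, η k i ∈ K i) ∧ ∑ k, w k * τ k ^ 2 = 1 ∧ ∑ k, w k • hlift (τ k) (u k) (η k) = t := by
  rw [CMP, mem_convexHull_iff_exists_fintype]
  constructor
  · rintro ⟨κ, _, w, z, hw, hw1, hz, hsum⟩
    choose ξ hξ η hη hz using hz
    have hdec : ∑ k, w k • ((ξ k (.inl 0) ^ 2, hlift (ξ k (.inl 0)) (fun j => ξ k (.inr j)) (η k)) :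
        ℝ × LiftSpace ι₀ ι₁ (Fin S)) = (1, t) := by
      apply component_injective
      simp only [map_sum, map_smul, ← vecMulVec_eq_component, ← hz, hsum]
    exact ⟨κ, _, w, fun k => ξ k (.inl 0), fun k j => ξ k (.inr j), η, hw, hw1,
      fun k => (hξ k).1, fun k => (hξ k).2, hη,
      by simpa [Prod.fst_sum] using congrArg Prod.fst hdec,
      by simpa [Prod.snd_sum] using congrArg Prod.snd hdec⟩
  · rintro ⟨κ, _, w, τ, u, η, hw, hw1, hτ, hu, hη, hτ1, rfl⟩
    refine ⟨κ, _, w, fun k => component (τ k ^ 2, hlift (τ k) (u k) (η k)), hw, hw1,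
      fun k => ⟨Sum.elim (fun _ => τ k) (u k), ⟨hτ k, hu k⟩, η k, hη k, ?_⟩, ?_⟩
    · exact (vecMulVec_eq_component (Sum.elim (fun _ => τ k) (u k)) (η k)).symm
    · rw [← hτ1]
      simp only [← map_smul, ← map_sum]
      congr 1
      ext1 <;> simp [Prod.fst_sum, Prod.snd_sum]

end Component

section Relaxation

variable {ι₀ ι₁ : Type*} [Fintype ι₀] [Fintype ι₁]

def feasSet {μ : Type*} (K₀ : Set (ι₀ → ℝ)) (K : Set (ι₁ → ℝ)) (F : Matrix μ ι₀ ℝ)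
    (G : Matrix μ ι₁ ℝ) (r : μ → ℝ) : Set ((ι₀ → ℝ) × (ι₁ → ℝ)) :=
  {p | p.1 ∈ K₀ ∧ p.2 ∈ K ∧ F *ᵥ p.1 + G *ᵥ p.2 = r}

section FeasSet

variable {μ : Type*} {K₀ : Set (ι₀ → ℝ)} {K : Set (ι₁ → ℝ)} {F : Matrix μ ι₀ ℝ}
  {G : Matrix μ ι₁ ℝ} {r : μ → ℝ} {u : ι₀ → ℝ} {η : ι₁ → ℝ}

theorem eq_zero_of_isBounded_feasSet (hK₀ : Convex ℝ K₀) (hK₀' : IsCone K₀)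
    (hK : Convex ℝ K) (hK' : IsCone K) (hne : (feasSet K₀ K F G r).Nonempty)
    (hb : Bornology.IsBounded (feasSet K₀ K F G r)) (hu : u ∈ K₀) (hη : η ∈ K)
    (h : F *ᵥ u + G *ᵥ η = 0) : u = 0 ∧ η = 0 := by
  obtain ⟨⟨p, q⟩, hp, hq, hpq⟩ := hne
  refine Prod.mk_eq_zero.1 (hb.eq_zero_of_add_smul_mem (p := (p, q)) fun c hc =>
    ⟨hK₀'.add_mem hK₀ hp (hK₀' c hc u hu), hK'.add_mem hK hq (hK' c hc η hη), ?_⟩)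
  simp only [Prod.fst_add, Prod.snd_add, Prod.smul_mk, mulVec_add, mulVec_smul]
  rw [add_add_add_comm, hpq, ← smul_add, h, smul_zero, add_zero]

theorem inv_smul_mem_feasSet (hK₀' : IsCone K₀) (hK' : IsCone K) {τ : ℝ} (hτ : 0 < τ)
    (hu : u ∈ K₀) (hη : η ∈ K) (h : F *ᵥ u + G *ᵥ η = τ • r) :
    (τ⁻¹ • u, τ⁻¹ • η) ∈ feasSet K₀ K F G r :=
  ⟨hK₀' _ (inv_nonneg.2 hτ.le) u hu, hK' _ (inv_nonneg.2 hτ.le) η hη, by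
    rw [mulVec_smul, mulVec_smul, ← smul_add, h, inv_smul_smul₀ hτ.ne']⟩

end FeasSet

theorem mulVec_add_eq_smul_of_moments {μ σ κ : Type*} [Fintype κ] {F : Matrix μ ι₀ ℝ}
    {G : Matrix μ ι₁ ℝ} {r : μ → ℝ} {i : σ} {w τ : κ → ℝ} {u : κ → ι₀ → ℝ}
    {η : κ → σ → ι₁ → ℝ} (hw : ∀ k, 0 ≤ w k) (hτ : ∑ k, w k * τ k ^ 2 = 1)
    (hlin : linConstraint F G i (∑ k, w k • hlift (τ k) (u k) (η k)) = r)
    (hmom : ∀ l, momentMatrix F G i (∑ k, w k • hlift (τ k) (u k) (η k)) l l = r l * r l) :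
    ∀ k, w k ≠ 0 → F *ᵥ u k + G *ᵥ η k i = τ k • r := by
  intro k hk
  ext l
  simp only [map_sum, map_smul, linConstraint_hlift, momentMatrix_hlift] at hlin hmom
  rw [Pi.smul_apply, smul_eq_mul, mul_comm]
  refine eq_mul_of_sum_mul_sq_eq (β := fun k => (F *ᵥ u k + G *ᵥ η k i) l) (fun k _ => hw k) hτ
    ?_ ?_ k (Finset.mem_univ k) hk
  · simpa [Finset.sum_apply, mul_add] using congrFun hlin l
  · simpa [Matrix.sum_apply, vecMulVec_apply, sq] using hmom l

variable {S : ℕ} {μ : Fin S → Type*} {κ : Type*} (K₀ : Set (ι₀ → ℝ)) (K : Fin S → Set (ι₁ → ℝ))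
  (F : ∀ i, Matrix (μ i) ι₀ ℝ) (G : ∀ i, Matrix (μ i) ι₁ ℝ) (r : ∀ i, μ i → ℝ)
  (L : κ → LiftSpace ι₀ ι₁ (Fin S) →ₗ[ℝ] ℝ) (d : κ → ℝ)

def liftedSet : Set (LiftSpace ι₀ ι₁ (Fin S)) :=
  {t | ∃ x y, (∀ i, (x, y i) ∈ feasSet K₀ (K i) (F i) (G i) (r i)) ∧
    (∀ j, L j (lift x y) + d j = 0) ∧ t = lift x y}

def cmpRelaxation : Set (LiftSpace ι₀ ι₁ (Fin S)) :=
  {t | t.2.1.IsSymm ∧ (∀ i, (t.2.2 i).2.2.IsSymm) ∧ (∀ i, linConstraint (F i) (G i) i t = r i) ∧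
    (∀ i l, momentMatrix (F i) (G i) i t l l = r i l * r i l) ∧ (∀ j, L j t + d j = 0) ∧
    component (1, t) ∈ CMP (SetProd {v : Fin 1 → ℝ | 0 ≤ v 0} K₀) K}

theorem convexHull_liftedSet_subset [NeZero S] :
    convexHull ℝ (liftedSet K₀ K F G r L d) ⊆ cmpRelaxation K₀ K F G r L d := by
  intro t ht
  obtain ⟨ι, _, w, z, hw, hw1, hz, rfl⟩ := mem_convexHull_iff_exists_fintype.1 ht
  choose x y hfeas hzero hz using hz
  obtain rfl : z = fun k => lift (x k) (y k) := funext hz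
  refine ⟨?_, fun i => ?_, fun i => ?_, fun i l => ?_, fun j => ?_, ?_⟩
  · simp [IsSymm, lift, Prod.snd_sum, Prod.fst_sum, transpose_sum]
  · simp [IsSymm, lift, Prod.snd_sum, transpose_sum]
  · exact (linConstraint _ _ i).map_sum_smul_of_forall_eq hw1 fun k => (hfeas k i).2.2
  · rw [(momentMatrix (F i) (G i) i).map_sum_smul_of_forall_eq hw1 fun k => by
      rw [← hlift_one, momentMatrix_hlift, (hfeas k i).2.2]]
    rfl
  · rw [(L j).map_sum_smul_of_forall_eq hw1 fun k => eq_neg_of_add_eq_zero_left (hzero k j),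
      neg_add_cancel]
  · exact component_mem_CMP_iff.2 ⟨ι, _, w, fun _ => 1, x, y, hw, hw1, fun _ => zero_le_one,
      fun k => (hfeas k 0).1, fun k i => (hfeas k i).2.1, by simpa using hw1, by simp [hlift_one]⟩

theorem cmpRelaxation_subset_convexHull [NeZero S] (hK₀ : Convex ℝ K₀) (hK₀' : IsCone K₀)
    (hK : ∀ i, Convex ℝ (K i)) (hK' : ∀ i, IsCone (K i))
    (hne : ∀ i, (feasSet K₀ (K i) (F i) (G i) (r i)).Nonempty)
    (hb : ∀ i, Bornology.IsBounded (feasSet K₀ (K i) (F i) (G i) (r i)))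
    (hnonneg : ∀ x y, (∀ i, (x, y i) ∈ feasSet K₀ (K i) (F i) (G i) (r i)) →
      ∀ j, 0 ≤ L j (lift x y) + d j) :
    cmpRelaxation K₀ K F G r L d ⊆ convexHull ℝ (liftedSet K₀ K F G r L d) := by
  rintro t ⟨-, -, hlin, hmom, hquad, hcmp⟩
  obtain ⟨κ', _, w, τ, u, η, hw, -, hτ, hu, hη, hτ1, rfl⟩ := component_mem_CMP_iff.1 hcmp
  have hscale : ∀ k, w k ≠ 0 → ∀ i, F i *ᵥ u k + G i *ᵥ η k i = τ k • r i :=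
    fun k hk i => mulVec_add_eq_smul_of_moments hw hτ1 (hlin i) (hmom i) k hk
  have hdeg : ∀ k, w k ≠ 0 → τ k = 0 → u k = 0 ∧ η k = 0 := by
    intro k hk h0
    have h := fun i => eq_zero_of_isBounded_feasSet hK₀ hK₀' (hK i) (hK' i) (hne i) (hb i)
      (hu k) (hη k i) (by rw [hscale k hk i, h0, zero_smul])
    exact ⟨(h 0).1, funext fun i => (h i).2⟩
  set x := fun k => (τ k)⁻¹ • u k
  set y := fun k i => (τ k)⁻¹ • η k i
  have hfeas : ∀ k, w k * τ k ^ 2 ≠ 0 → ∀ i,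
      (x k, y k i) ∈ feasSet K₀ (K i) (F i) (G i) (r i) := by
    intro k hk i
    have hτk : 0 < τ k :=
      (hτ k).lt_of_ne' (pow_ne_zero_iff two_ne_zero |>.1 (right_ne_zero_of_mul hk))
    exact inv_smul_mem_feasSet hK₀' (hK' i) hτk (hu k) (hη k i)
      (hscale k (left_ne_zero_of_mul hk) i)
  have ht : ∑ k, w k • hlift (τ k) (u k) (η k) = ∑ k, (w k * τ k ^ 2) • lift (x k) (y k) := by
    refine Finset.sum_congr rfl fun k _ => ?_
    rcases eq_or_ne (w k) 0 with hk | hk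
    · simp [hk]
    · rw [hlift_eq_sq_smul_lift (hdeg k hk), mul_smul]
  rw [ht] at hquad ⊢
  have hω : ∀ k, 0 ≤ w k * τ k ^ 2 := fun k => mul_nonneg (hw k) (sq_nonneg _)
  refine sum_smul_mem_convexHull_of_ne_zero hω hτ1 fun k hk =>
    ⟨x k, y k, hfeas k hk, fun j => ?_, rfl⟩
  exact (L j).eq_of_map_sum_smul_add_eq_zero (d j) hω hτ1
    (fun k hk => hnonneg _ _ (hfeas k hk) j) (hquad j) k hk

end Relaxation

theorem stmt_12_general (S n₁ n₂ K : ℕ) (hS : 1 ≤ S)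
    (m : Fin S → ℕ)
    (K₀ : Set (Fin n₁ → ℝ)) (hK₀conv : Convex ℝ K₀)
    (hK₀cone : IsCone K₀)
    (Ki : Fin S → Set (Fin n₂ → ℝ))
    (hKiconv : ∀ i, Convex ℝ (Ki i)) (hKicone : ∀ i, IsCone (Ki i))
    (F : ∀ i : Fin S, Matrix (Fin (m i)) (Fin n₁) ℝ)
    (G : ∀ i : Fin S, Matrix (Fin (m i)) (Fin n₂) ℝ)
    (r : ∀ i : Fin S, Fin (m i) → ℝ)
    (A : Fin K → Matrix (Fin n₁) (Fin n₁) ℝ)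
    (a : Fin K → Fin n₁ → ℝ)
    (B : Fin K → Fin S → Matrix (Fin n₁) (Fin n₂) ℝ)
    (C : Fin K → Fin S → Matrix (Fin n₂) (Fin n₂) ℝ)
    (c : Fin K → Fin S → Fin n₂ → ℝ) (d : Fin K → ℝ)
    (Q : Fin K → (Fin n₁ → ℝ) → (Fin S → Fin n₂ → ℝ) → ℝ)
    (hQ : ∀ j x y, Q j x y = x ⬝ᵥ (A j).mulVec x + a j ⬝ᵥ x +
      (∑ i, (x ⬝ᵥ (B j i).mulVec (y i) + y i ⬝ᵥ (C j i).mulVec (y i) + c j i ⬝ᵥ y i)) + d j)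
    (Feas : ∀ _ : Fin S, Set ((Fin n₁ → ℝ) × (Fin n₂ → ℝ)))
    (hFeas : ∀ i, Feas i =
      {p | p.1 ∈ K₀ ∧ p.2 ∈ Ki i ∧ (F i).mulVec p.1 + (G i).mulVec p.2 = r i})
    (hFne : ∀ i, (Feas i).Nonempty) (hFbdd : ∀ i, Bornology.IsBounded (Feas i))
    (hQnonneg : ∀ (x : Fin n₁ → ℝ) (y : Fin S → Fin n₂ → ℝ),
      (∀ i, (x, y i) ∈ Feas i) → ∀ j, 0 ≤ Q j x y) :
    convexHull ℝ {t : (Fin n₁ → ℝ) × Matrix (Fin n₁) (Fin n₁) ℝ ×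
        (Fin S → (Fin n₂ → ℝ) × Matrix (Fin n₂) (Fin n₁) ℝ × Matrix (Fin n₂) (Fin n₂) ℝ) |
      ∃ (x : Fin n₁ → ℝ) (y : Fin S → Fin n₂ → ℝ),
        (∀ i, (x, y i) ∈ Feas i) ∧ (∀ j, Q j x y = 0) ∧
        t = (x, Matrix.vecMulVec x x,
          fun i => (y i, Matrix.vecMulVec (y i) x, Matrix.vecMulVec (y i) (y i)))} =
    {t : (Fin n₁ → ℝ) × Matrix (Fin n₁) (Fin n₁) ℝ ×
        (Fin S → (Fin n₂ → ℝ) × Matrix (Fin n₂) (Fin n₁) ℝ × Matrix (Fin n₂) (Fin n₂) ℝ) |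
      t.2.1.IsSymm ∧ (∀ i, ((t.2.2 i).2.2).IsSymm) ∧
      (∀ i, (F i).mulVec t.1 + (G i).mulVec ((t.2.2 i).1) = r i) ∧
      (∀ i, ∀ l, (Matrix.fromCols (F i) (G i) *
          Matrix.fromBlocks t.2.1 ((t.2.2 i).2.1)ᵀ ((t.2.2 i).2.1) ((t.2.2 i).2.2) *
          (Matrix.fromCols (F i) (G i))ᵀ) l l = r i l * r i l) ∧
      (∀ j, frob (A j) t.2.1 + a j ⬝ᵥ t.1 +
        (∑ i, (frob ((B j i)ᵀ) ((t.2.2 i).2.1) + frob (C j i) ((t.2.2 i).2.2) +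
          c j i ⬝ᵥ (t.2.2 i).1)) + d j = 0) ∧
      ((Matrix.fromBlocks (Matrix.of fun (_ _ : Fin 1) => (1 : ℝ))
          (Matrix.of fun (_ : Fin 1) j => t.1 j)
          (Matrix.of fun i (_ : Fin 1) => t.1 i) t.2.1,
        fun i => (Matrix.fromCols (Matrix.of fun a (_ : Fin 1) => (t.2.2 i).1 a)
            ((t.2.2 i).2.1),
          (t.2.2 i).2.2))
        ∈ CMP (SetProd {v : Fin 1 → ℝ | 0 ≤ v 0} K₀) Ki)} := by
  have : NeZero S := NeZero.of_pos hS
  obtain rfl : Feas = fun i => feasSet K₀ (Ki i) (F i) (G i) (r i) := funext hFeas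
  obtain rfl : Q = fun j x y => quadForm (A j) (a j) (B j) (C j) (c j) (lift x y) + d j := by
    ext j x y
    rw [hQ, quadForm_lift]
  exact (convexHull_liftedSet_subset ..).antisymm
    (cmpRelaxation_subset_convexHull _ _ _ _ _ _ _ hK₀conv hK₀cone hKiconv hKicone hFne hFbdd
      hQnonneg)

theorem stmt_12 (S n₁ n₂ K : ℕ) (hS : 1 ≤ S) (h₁ : 1 ≤ n₁) (h₂ : 1 ≤ n₂) (hK : 1 ≤ K)
    (m : Fin S → ℕ) (hm : ∀ i, 1 ≤ m i)
    (K₀ : Set (Fin n₁ → ℝ)) (hK₀c : IsClosed K₀) (hK₀conv : Convex ℝ K₀)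
    (hK₀cone : IsCone K₀)
    (Ki : Fin S → Set (Fin n₂ → ℝ)) (hKic : ∀ i, IsClosed (Ki i))
    (hKiconv : ∀ i, Convex ℝ (Ki i)) (hKicone : ∀ i, IsCone (Ki i))
    (F : ∀ i : Fin S, Matrix (Fin (m i)) (Fin n₁) ℝ)
    (G : ∀ i : Fin S, Matrix (Fin (m i)) (Fin n₂) ℝ)
    (r : ∀ i : Fin S, Fin (m i) → ℝ)
    (A : Fin K → Matrix (Fin n₁) (Fin n₁) ℝ) (hA : ∀ j, (A j).IsSymm)
    (a : Fin K → Fin n₁ → ℝ)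
    (B : Fin K → Fin S → Matrix (Fin n₁) (Fin n₂) ℝ)
    (C : Fin K → Fin S → Matrix (Fin n₂) (Fin n₂) ℝ) (hC : ∀ j i, (C j i).IsSymm)
    (c : Fin K → Fin S → Fin n₂ → ℝ) (d : Fin K → ℝ)
    (Q : Fin K → (Fin n₁ → ℝ) → (Fin S → Fin n₂ → ℝ) → ℝ)
    (hQ : ∀ j x y, Q j x y = x ⬝ᵥ (A j).mulVec x + a j ⬝ᵥ x +
      (∑ i, (x ⬝ᵥ (B j i).mulVec (y i) + y i ⬝ᵥ (C j i).mulVec (y i) + c j i ⬝ᵥ y i)) + d j)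
    (Feas : ∀ _ : Fin S, Set ((Fin n₁ → ℝ) × (Fin n₂ → ℝ)))
    (hFeas : ∀ i, Feas i =
      {p | p.1 ∈ K₀ ∧ p.2 ∈ Ki i ∧ (F i).mulVec p.1 + (G i).mulVec p.2 = r i})
    (hFne : ∀ i, (Feas i).Nonempty) (hFbdd : ∀ i, Bornology.IsBounded (Feas i))
    (hQnonneg : ∀ (x : Fin n₁ → ℝ) (y : Fin S → Fin n₂ → ℝ),
      (∀ i, (x, y i) ∈ Feas i) → ∀ j, 0 ≤ Q j x y) :
    convexHull ℝ {t : (Fin n₁ → ℝ) × Matrix (Fin n₁) (Fin n₁) ℝ ×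
        (Fin S → (Fin n₂ → ℝ) × Matrix (Fin n₂) (Fin n₁) ℝ × Matrix (Fin n₂) (Fin n₂) ℝ) |
      ∃ (x : Fin n₁ → ℝ) (y : Fin S → Fin n₂ → ℝ),
        (∀ i, (x, y i) ∈ Feas i) ∧ (∀ j, Q j x y = 0) ∧
        t = (x, Matrix.vecMulVec x x,
          fun i => (y i, Matrix.vecMulVec (y i) x, Matrix.vecMulVec (y i) (y i)))} =
    {t : (Fin n₁ → ℝ) × Matrix (Fin n₁) (Fin n₁) ℝ ×
        (Fin S → (Fin n₂ → ℝ) × Matrix (Fin n₂) (Fin n₁) ℝ × Matrix (Fin n₂) (Fin n₂) ℝ) |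
      t.2.1.IsSymm ∧ (∀ i, ((t.2.2 i).2.2).IsSymm) ∧
      (∀ i, (F i).mulVec t.1 + (G i).mulVec ((t.2.2 i).1) = r i) ∧
      (∀ i, ∀ l, (Matrix.fromCols (F i) (G i) *
          Matrix.fromBlocks t.2.1 ((t.2.2 i).2.1)ᵀ ((t.2.2 i).2.1) ((t.2.2 i).2.2) *
          (Matrix.fromCols (F i) (G i))ᵀ) l l = r i l * r i l) ∧
      (∀ j, frob (A j) t.2.1 + a j ⬝ᵥ t.1 +
        (∑ i, (frob ((B j i)ᵀ) ((t.2.2 i).2.1) + frob (C j i) ((t.2.2 i).2.2) +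
          c j i ⬝ᵥ (t.2.2 i).1)) + d j = 0) ∧
      ((Matrix.fromBlocks (Matrix.of fun (_ _ : Fin 1) => (1 : ℝ))
          (Matrix.of fun (_ : Fin 1) j => t.1 j)
          (Matrix.of fun i (_ : Fin 1) => t.1 i) t.2.1,
        fun i => (Matrix.fromCols (Matrix.of fun a (_ : Fin 1) => (t.2.2 i).1 a)
            ((t.2.2 i).2.1),
          (t.2.2 i).2.2))
        ∈ CMP (SetProd {v : Fin 1 → ℝ | 0 ≤ v 0} K₀) Ki)} :=
  stmt_12_general S n₁ n₂ K hS m K₀ hK₀conv hK₀cone Ki hKiconv hKicone F G r A a B C c d Q hQ Feas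
    hFeas hFne hFbdd hQnonneg
end

section
/- Let n ≥ 1, w ∈ ℝ and y ∈ ℝ^n. If the (n+1)×(n+1) block matrix [[w, yᵀ],[y, y yᵀ]] is positive semidefinite, then w ≥ 1 or y = 0. -/
/-! Testing the form on `(1, x)` gives `(w - 1) + (1 + y ⬝ᵥ x)²`, and when `y ≠ 0` one can pick
`x` with `y ⬝ᵥ x = -1`, leaving `w - 1 ≥ 0`. -/

open Matrix

theorem dotProduct_fromBlocks_vecMulVec_mulVec {R ι : Type*} [CommRing R] [Fintype ι]
    (w a : R) (y x : ι → R) :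
    Sum.elim (fun _ => a) x ⬝ᵥ
        (fromBlocks (of fun (_ _ : Fin 1) => w) (of fun (_ : Fin 1) j => y j)
          (of fun i (_ : Fin 1) => y i) (vecMulVec y y) *ᵥ Sum.elim (fun _ => a) x) =
      (w - 1) * a ^ 2 + (a + y ⬝ᵥ x) ^ 2 := by
  have hC : (of fun i (_ : Fin 1) => y i) *ᵥ (fun _ => a) = a • y := by
    ext i; simp [mulVec, dotProduct, mul_comm]
  have hD : vecMulVec y y *ᵥ x = (y ⬝ᵥ x) • y := by
    rw [vecMulVec_mulVec, op_smul_eq_smul]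
  rw [fromBlocks_mulVec, sumElim_dotProduct_sumElim]
  simp only [Function.comp_def, Sum.elim_inl, Sum.elim_inr, hC, hD, ← add_smul,
    dotProduct_smul, dotProduct_comm x y, smul_eq_mul]
  simp only [dotProduct, mulVec, of_apply, Pi.add_apply, Finset.univ_unique, Fin.default_eq_zero,
    Finset.sum_const, Finset.card_singleton, one_smul]
  ring

theorem exists_dotProduct_eq_neg_one {K ι : Type*} [Field K] [Fintype ι]
    {y : ι → K} (hy : y ≠ 0) : ∃ x : ι → K, y ⬝ᵥ x = -1 := by
  classical
  obtain ⟨i, hi⟩ := Function.ne_iff.mp hy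
  exact ⟨Pi.single i (-(y i)⁻¹), by rw [dotProduct_single, mul_neg, mul_inv_cancel₀ hi]⟩

theorem stmt_14_general (n : ℕ) (w : ℝ) (y : Fin n → ℝ)
    (h : (Matrix.fromBlocks (Matrix.of fun (_ _ : Fin 1) => w)
        (Matrix.of fun (_ : Fin 1) j => y j) (Matrix.of fun i (_ : Fin 1) => y i)
        (Matrix.vecMulVec y y)).PosSemidef) :
    1 ≤ w ∨ y = 0 := by
  refine or_iff_not_imp_right.mpr fun hy => ?_
  obtain ⟨x, hx⟩ := exists_dotProduct_eq_neg_one hy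
  have hform := h.dotProduct_mulVec_nonneg (Sum.elim (fun _ => 1) x)
  rw [star_trivial, dotProduct_fromBlocks_vecMulVec_mulVec, hx] at hform
  linarith

theorem stmt_14 (n : ℕ) (hn : 1 ≤ n) (w : ℝ) (y : Fin n → ℝ)
    (h : (Matrix.fromBlocks (Matrix.of fun (_ _ : Fin 1) => w)
        (Matrix.of fun (_ : Fin 1) j => y j) (Matrix.of fun i (_ : Fin 1) => y i)
        (Matrix.vecMulVec y y)).PosSemidef) :
    1 ≤ w ∨ y = 0 :=
  stmt_14_general n w y h
end
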